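/- arXiv:2205.05315 — 5 statements merged into one kernel-verified Lean document; each statement's English description precedes it below -/
import Mathlib

section
/- Let X ⊆ ℝ be compact and let μ, ν be Borel probability measures on X with quantile functions F_μ^{-1} and F_ν^{-1} (defined with infimum over X). Then the Wasserstein-1 distance between μ and ν equals the L¹ distance between the quantile functions: W₁(μ, ν) = ∫₀¹ |F_μ^{-1}(t) − F_ν^{-1}(t)| dt. -/
open MeasureTheory Set ProbabilityTheory
open scoped ENNReal symmDiff

/-!
For `U` uniform on `(0, 1]`, the pair `(F_μ⁻¹ U, F_ν⁻¹ U)` is a coupling of `μ` and `ν` whose cost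
is `∫₀¹ |F_μ⁻¹ - F_ν⁻¹|`. This integral is the area of the region between the graphs of `F_μ` and
`F_ν`, so it also equals `∫ |F_μ - F_ν|`. For any coupling `γ`, `|F_μ z - F_ν z|` is at most the
`γ`-mass of the pairs `(x, y)` separated by `z`, and integrating over `z` gives `∫ |x - y| dγ`.
-/

namespace Set

theorem Iic_symmDiff_Iic {α : Type*} [LinearOrder α] (a b : α) : Iic a ∆ Iic b = uIoc a b := by
  ext x
  simp only [mem_symmDiff, mem_Iic, uIoc, mem_Ioc, min_lt_iff, le_max_iff]
  grind

theorem Ici_symmDiff_Ici {α : Type*} [LinearOrder α] (a b : α) :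
    Ici a ∆ Ici b = Ico (min a b) (max a b) := by
  ext x
  simp only [mem_symmDiff, mem_Ici, mem_Ico, min_le_iff, lt_max_iff]
  grind

end Set

theorem Real.volume_Iic_symmDiff_Iic (a b : ℝ) :
    volume (Iic a ∆ Iic b) = ENNReal.ofReal |a - b| := by
  rw [Iic_symmDiff_Iic, Real.volume_uIoc, abs_sub_comm]

theorem Real.volume_Ici_symmDiff_Ici (a b : ℝ) :
    volume (Ici a ∆ Ici b) = ENNReal.ofReal |a - b| := by
  rw [Ici_symmDiff_Ici, Real.volume_Ico, max_sub_min_eq_abs', abs_sub_comm]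

theorem lintegral_abs_sub_cdf_le {μ ν : Measure ℝ} [IsProbabilityMeasure μ]
    [IsProbabilityMeasure ν] {γ : Measure (ℝ × ℝ)} [IsFiniteMeasure γ]
    (h1 : γ.map Prod.fst = μ) (h2 : γ.map Prod.snd = ν) :
    ∫⁻ z, ENNReal.ofReal |cdf μ z - cdf ν z| ≤ ∫⁻ p, ENNReal.ofReal |p.1 - p.2| ∂γ := by
  set E : Set ((ℝ × ℝ) × ℝ) := {q | q.1.1 ≤ q.2} ∆ {q | q.1.2 ≤ q.2}
  have hE : MeasurableSet E :=
    (measurableSet_le (by fun_prop) (by fun_prop)).symmDiff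
      (measurableSet_le (by fun_prop) (by fun_prop))
  have hz_slice (z : ℝ) :
      ENNReal.ofReal |cdf μ z - cdf ν z| ≤ γ ((fun p => (p, z)) ⁻¹' E) := by
    have hμz : cdf μ z = γ.real (Prod.fst ⁻¹' Iic z) := by
      rw [cdf_eq_real, ← h1, map_measureReal_apply measurable_fst measurableSet_Iic]
    have hνz : cdf ν z = γ.real (Prod.snd ⁻¹' Iic z) := by
      rw [cdf_eq_real, ← h2, map_measureReal_apply measurable_snd measurableSet_Iic]
    rw [hμz, hνz, ← ofReal_measureReal]
    exact ENNReal.ofReal_le_ofReal (abs_measureReal_sub_le_measureReal_symmDiff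
      (measurable_fst measurableSet_Iic).nullMeasurableSet
      (measurable_snd measurableSet_Iic).nullMeasurableSet)
  have hp_slice (p : ℝ × ℝ) : volume (Prod.mk p ⁻¹' E) = ENNReal.ofReal |p.1 - p.2| :=
    Real.volume_Ici_symmDiff_Ici p.1 p.2
  calc ∫⁻ z, ENNReal.ofReal |cdf μ z - cdf ν z|
      ≤ ∫⁻ z, γ ((fun p => (p, z)) ⁻¹' E) := lintegral_mono hz_slice
    _ = (γ.prod volume) E := (Measure.prod_apply_symm hE).symm
    _ = ∫⁻ p, ENNReal.ofReal |p.1 - p.2| ∂γ := by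
        rw [Measure.prod_apply hE]
        exact lintegral_congr hp_slice

instance : IsProbabilityMeasure (volume.restrict (Ioc (0 : ℝ) 1)) :=
  ⟨by simp⟩

/-- The Galois connection that characterizes the generalized inverse of `cdf μ` on `(0, 1]`. -/
def IsQuantileFunction (μ : Measure ℝ) (Q : ℝ → ℝ) : Prop :=
  ∀ t ∈ Ioc (0 : ℝ) 1, ∀ z, Q t ≤ z ↔ t ≤ cdf μ z

namespace IsQuantileFunction

variable {μ ν : Measure ℝ} {Q P : ℝ → ℝ}

theorem monotoneOn (hQ : IsQuantileFunction μ Q) : MonotoneOn Q (Ioc 0 1) :=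
  fun s hs t ht hst => (hQ s hs (Q t)).2 (hst.trans ((hQ t ht (Q t)).1 le_rfl))

theorem aemeasurable (hQ : IsQuantileFunction μ Q) :
    AEMeasurable Q (volume.restrict (Ioc 0 1)) :=
  aemeasurable_restrict_of_monotoneOn measurableSet_Ioc hQ.monotoneOn

theorem map_volume [IsProbabilityMeasure μ] (hQ : IsQuantileFunction μ Q) :
    (volume.restrict (Ioc 0 1)).map Q = μ := by
  have := Measure.isProbabilityMeasure_map (μ := volume.restrict (Ioc (0 : ℝ) 1)) hQ.aemeasurable
  refine Measure.ext_of_Iic _ _ fun z => ?_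
  have hpre : Q ⁻¹' Iic z ∩ Ioc 0 1 = Ioc 0 (cdf μ z) := by
    ext t
    simp only [mem_inter_iff, mem_preimage, mem_Iic, mem_Ioc]
    constructor
    · rintro ⟨hz, ht⟩
      exact ⟨ht.1, (hQ t ht z).1 hz⟩
    · rintro ⟨h0, hz⟩
      have ht : t ∈ Ioc (0 : ℝ) 1 := ⟨h0, hz.trans (cdf_le_one μ z)⟩
      exact ⟨(hQ t ht z).2 hz, ht⟩
  rw [Measure.map_apply_of_aemeasurable hQ.aemeasurable measurableSet_Iic,
    Measure.restrict_apply' measurableSet_Ioc, hpre, Real.volume_Ioc, sub_zero, ofReal_cdf]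

theorem lintegral_abs_sub [IsProbabilityMeasure μ] [IsProbabilityMeasure ν]
    (hQ : IsQuantileFunction μ Q) (hP : IsQuantileFunction ν P) :
    ∫⁻ t in Ioc 0 1, ENNReal.ofReal |Q t - P t| = ∫⁻ z, ENNReal.ofReal |cdf μ z - cdf ν z| := by
  set E : Set (ℝ × ℝ) := {q | q.2 ≤ cdf μ q.1} ∆ {q | q.2 ≤ cdf ν q.1}
  have hE : MeasurableSet E :=
    (measurableSet_le measurable_snd ((cdf μ).mono.measurable.comp measurable_fst)).symmDiff
      (measurableSet_le measurable_snd ((cdf ν).mono.measurable.comp measurable_fst))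
  have ht_slice (t : ℝ) (ht : t ∈ Ioc (0 : ℝ) 1) :
      volume ((fun z => (z, t)) ⁻¹' E) = ENNReal.ofReal |Q t - P t| := by
    have hset : (fun z => (z, t)) ⁻¹' E = Ici (Q t) ∆ Ici (P t) := by
      ext z
      simp only [E, mem_preimage, mem_symmDiff, mem_ofPred_eq, mem_Ici, hQ t ht, hP t ht]
    rw [hset, Real.volume_Ici_symmDiff_Ici]
  have hz_slice (z : ℝ) : volume.restrict (Ioc 0 1) (Prod.mk z ⁻¹' E) =
      ENNReal.ofReal |cdf μ z - cdf ν z| := by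
    have hset : Prod.mk z ⁻¹' E = Iic (cdf μ z) ∆ Iic (cdf ν z) := rfl
    have hsub : Iic (cdf μ z) ∆ Iic (cdf ν z) ⊆ Ioc 0 1 := by
      rw [Iic_symmDiff_Iic]
      exact Ioc_subset_Ioc (le_min (cdf_nonneg μ z) (cdf_nonneg ν z))
        (max_le (cdf_le_one μ z) (cdf_le_one ν z))
    rw [Measure.restrict_apply' measurableSet_Ioc, hset, inter_eq_left.2 hsub,
      Real.volume_Iic_symmDiff_Iic]
  calc ∫⁻ t in Ioc 0 1, ENNReal.ofReal |Q t - P t|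
      = ∫⁻ t in Ioc 0 1, volume ((fun z => (z, t)) ⁻¹' E) :=
        (setLIntegral_congr_fun measurableSet_Ioc ht_slice).symm
    _ = (volume.prod (volume.restrict (Ioc 0 1))) E := (Measure.prod_apply_symm hE).symm
    _ = ∫⁻ z, ENNReal.ofReal |cdf μ z - cdf ν z| := by
        rw [Measure.prod_apply hE]
        exact lintegral_congr hz_slice

theorem exists_coupling [IsProbabilityMeasure μ] [IsProbabilityMeasure ν]
    (hQ : IsQuantileFunction μ Q) (hP : IsQuantileFunction ν P) :
    ∃ γ : Measure (ℝ × ℝ), IsProbabilityMeasure γ ∧ γ.map Prod.fst = μ ∧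
      γ.map Prod.snd = ν ∧ ∫ p, |p.1 - p.2| ∂γ = ∫ t in Ioc 0 1, |Q t - P t| := by
  have hQP : AEMeasurable (fun t => (Q t, P t)) (volume.restrict (Ioc 0 1)) :=
    hQ.aemeasurable.prodMk hP.aemeasurable
  refine ⟨(volume.restrict (Ioc 0 1)).map fun t => (Q t, P t),
    Measure.isProbabilityMeasure_map hQP, ?_, ?_, ?_⟩
  · rw [AEMeasurable.map_map_of_aemeasurable measurable_fst.aemeasurable hQP]
    exact hQ.map_volume
  · rw [AEMeasurable.map_map_of_aemeasurable measurable_snd.aemeasurable hQP]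
    exact hP.map_volume
  · exact integral_map hQP (by fun_prop)

theorem integral_abs_sub_le [IsProbabilityMeasure μ] [IsProbabilityMeasure ν]
    (hQ : IsQuantileFunction μ Q) (hP : IsQuantileFunction ν P)
    {γ : Measure (ℝ × ℝ)} [IsFiniteMeasure γ] (h1 : γ.map Prod.fst = μ)
    (h2 : γ.map Prod.snd = ν) (hγ : Integrable (fun p : ℝ × ℝ => |p.1 - p.2|) γ) :
    ∫ t in Ioc 0 1, |Q t - P t| ≤ ∫ p, |p.1 - p.2| ∂γ := by
  rw [integral_eq_lintegral_of_nonneg_ae (ae_of_all _ fun _ => abs_nonneg _)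
      (f := fun t => |Q t - P t|)
      (hQ.aemeasurable.sub hP.aemeasurable).abs.aestronglyMeasurable,
    integral_eq_lintegral_of_nonneg_ae (ae_of_all _ fun _ => abs_nonneg _)
      hγ.aestronglyMeasurable, hQ.lintegral_abs_sub hP]
  exact ENNReal.toReal_mono hγ.lintegral_lt_top.ne (lintegral_abs_sub_cdf_le h1 h2)

end IsQuantileFunction

noncomputable def quantileOn (X : Set ℝ) (F : ℝ → ℝ) (t : ℝ) : ℝ :=
  sInf {x | x ∈ X ∧ t ≤ F x}

theorem cdf_eq_measureReal_inter_Iic {X : Set ℝ} {μ : Measure ℝ} [IsProbabilityMeasure μ]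
    (hμ : μ Xᶜ = 0) (z : ℝ) : cdf μ z = μ.real (X ∩ Iic z) := by
  rw [cdf_eq_real, measureReal_def, measureReal_def, inter_comm, measure_inter_conull hμ]

theorem isQuantileFunction_quantileOn {X : Set ℝ} (hX : IsCompact X) {μ : Measure ℝ}
    [IsProbabilityMeasure μ] (hμ : μ Xᶜ = 0) : IsQuantileFunction μ (quantileOn X (cdf μ)) := by
  intro t ht z
  set S := {x | x ∈ X ∧ t ≤ cdf μ x}
  -- a level `t ≤ cdf μ z` is already reached at the last point of `X` left of `z`
  have hreach (z : ℝ) (hz : t ≤ cdf μ z) : ∃ y ∈ S, y ≤ z := by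
    have hne : (X ∩ Iic z).Nonempty := by
      refine nonempty_iff_ne_empty.2 fun h => ?_
      rw [cdf_eq_measureReal_inter_Iic hμ, h, measureReal_empty] at hz
      exact ht.1.not_ge hz
    have hK : IsCompact (X ∩ Iic z) := hX.inter_right isClosed_Iic
    obtain ⟨hyX, hyz⟩ := hK.sSup_mem hne
    refine ⟨sSup (X ∩ Iic z), ⟨hyX, hz.trans ?_⟩, hyz⟩
    rw [cdf_eq_measureReal_inter_Iic hμ, cdf_eq_measureReal_inter_Iic hμ]
    exact measureReal_mono fun x hx => ⟨hx.1, le_csSup hK.bddAbove hx⟩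
  constructor
  · intro hz
    obtain ⟨b, hb⟩ := hX.bddAbove
    have hb1 : cdf μ b = 1 := by
      rw [cdf_eq_measureReal_inter_Iic hμ, inter_eq_left.2 fun x hx => mem_Iic.2 (hb hx),
        measureReal_def, (prob_compl_eq_zero_iff hX.isClosed.measurableSet).1 hμ,
        ENNReal.toReal_one]
    obtain ⟨y, hy, -⟩ := hreach b (hb1 ▸ ht.2)
    refine ge_of_tendsto ((cdf μ).right_continuous z |>.mono Ioi_subset_Ici_self) ?_
    filter_upwards [self_mem_nhdsWithin] with w (hw : z < w)
    obtain ⟨x, hxS, hxw⟩ := exists_lt_of_csInf_lt ⟨y, hy⟩ (hz.trans_lt hw)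
    exact hxS.2.trans ((cdf μ).mono hxw.le)
  · intro hz
    obtain ⟨y, hy, hyz⟩ := hreach z hz
    exact (csInf_le (hX.bddBelow.mono fun x hx => hx.1) hy).trans hyz

theorem integrable_abs_sub_of_ae_mem {X : Set ℝ} (hX : Bornology.IsBounded X)
    {γ : Measure (ℝ × ℝ)} [IsFiniteMeasure γ] (h : ∀ᵐ p ∂γ, p.1 ∈ X ∧ p.2 ∈ X) :
    Integrable (fun p : ℝ × ℝ => |p.1 - p.2|) γ :=
  Integrable.of_bound (by fun_prop) (Metric.diam X) <| h.mono fun p hp => by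
    simpa [Real.dist_eq] using Metric.dist_le_diam_of_mem hX hp.1 hp.2

theorem stmt_2_general (X : Set ℝ) (hX : IsCompact X)
    (μ ν : Measure ℝ) [IsProbabilityMeasure μ] [IsProbabilityMeasure ν]
    (hμ : μ Xᶜ = 0) (hν : ν Xᶜ = 0)
    (Fμ Fν : ℝ → ℝ)
    (hFμ : ∀ z, Fμ z = (μ (X ∩ Iic z)).toReal)
    (hFν : ∀ z, Fν z = (ν (X ∩ Iic z)).toReal)
    (Qμ Qν : ℝ → ℝ)
    (hQμ : ∀ t, Qμ t = sInf {x | x ∈ X ∧ t ≤ Fμ x})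
    (hQν : ∀ t, Qν t = sInf {x | x ∈ X ∧ t ≤ Fν x}) :
    sInf {c | ∃ γ : Measure (ℝ × ℝ), IsProbabilityMeasure γ ∧
        γ.map Prod.fst = μ ∧ γ.map Prod.snd = ν ∧ c = ∫ p, |p.1 - p.2| ∂γ}
      = ∫ t in Icc (0:ℝ) 1, |Qμ t - Qν t| := by
  obtain rfl : Fμ = cdf μ :=
    funext fun z => (hFμ z).trans (cdf_eq_measureReal_inter_Iic hμ z).symm
  obtain rfl : Fν = cdf ν :=
    funext fun z => (hFν z).trans (cdf_eq_measureReal_inter_Iic hν z).symm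
  obtain rfl : Qμ = quantileOn X (cdf μ) := funext hQμ
  obtain rfl : Qν = quantileOn X (cdf ν) := funext hQν
  have hQμ := isQuantileFunction_quantileOn hX hμ
  have hQν := isQuantileFunction_quantileOn hX hν
  rw [integral_Icc_eq_integral_Ioc]
  refine IsLeast.csInf_eq ⟨?_, ?_⟩
  · obtain ⟨γ, hγ, h1, h2, hcost⟩ := hQμ.exists_coupling hQν
    exact ⟨γ, hγ, h1, h2, hcost.symm⟩
  · rintro c ⟨γ, hγ, h1, h2, rfl⟩
    have hsupp : ∀ᵐ p ∂γ, p.1 ∈ X ∧ p.2 ∈ X := by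
      refine (ae_of_ae_map measurable_fst.aemeasurable ?_).and
        (ae_of_ae_map measurable_snd.aemeasurable ?_)
      · rw [h1]; exact mem_ae_iff.2 hμ
      · rw [h2]; exact mem_ae_iff.2 hν
    exact hQμ.integral_abs_sub_le hQν h1 h2 (integrable_abs_sub_of_ae_mem hX.isBounded hsupp)

theorem stmt_2 (X : Set ℝ) (hX : IsCompact X) (hXne : X.Nonempty)
    (μ ν : Measure ℝ) [IsProbabilityMeasure μ] [IsProbabilityMeasure ν]
    (hμ : μ Xᶜ = 0) (hν : ν Xᶜ = 0)
    (Fμ Fν : ℝ → ℝ)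
    (hFμ : ∀ z, Fμ z = (μ (X ∩ Iic z)).toReal)
    (hFν : ∀ z, Fν z = (ν (X ∩ Iic z)).toReal)
    (Qμ Qν : ℝ → ℝ)
    (hQμ : ∀ t, Qμ t = sInf {x | x ∈ X ∧ t ≤ Fμ x})
    (hQν : ∀ t, Qν t = sInf {x | x ∈ X ∧ t ≤ Fν x}) :
    sInf {c | ∃ γ : Measure (ℝ × ℝ), IsProbabilityMeasure γ ∧
        γ.map Prod.fst = μ ∧ γ.map Prod.snd = ν ∧ c = ∫ p, |p.1 - p.2| ∂γ}
      = ∫ t in Icc (0:ℝ) 1, |Qμ t - Qν t| :=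
  stmt_2_general X hX μ ν hμ hν Fμ Fν hFμ hFν Qμ Qν hQμ hQν
end

section
/- Let X = ⋃_{l=1}^{k} [κ̲_l, κ̄_l] be a finite union of disjoint compact intervals with knots κ₀ < κ₁ < ⋯ < κ_m chosen so that κ₀ = min X, κ_m = max X, and every interval endpoint is a knot. Let g₀, g₁, …, g_m be the associated CPWA hat functions on X (g_j is the piecewise affine function equal to 1 at κ_j, 0 at all other knots, affine on X ∩ [κ_{i−1},κ_i] for each i). Then the convex hull of the image set {(g₁(x), …, g_m(x)) : x ∈ X} ⊆ ℝ^m equals the standard simplex {(v₁,…,v_m) : v_j ≥ 0 for all j, ∑_{j=1}^m v_j ≤ 1}. -/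
/-!
On a piece `[κ i, κ (i + 1)]` every hat function except `g i` and `g (i + 1)` vanishes, and
these two are the complementary affine ramps of the piece, so `∑ j ≥ 1, g j x ≤ 1`; with
`g j ≥ 0` this puts the image, hence its convex hull, inside the simplex. Conversely the knots
are mapped to the vertices: `κ 0` to `0` and `κ j` to the `j`-th unit vector.
-/

open Set Finset

section Simplex

variable {ι : Type*} [Fintype ι]

lemma convex_setOf_nonneg_sum_le_one :
    Convex ℝ {v : ι → ℝ | (∀ j, 0 ≤ v j) ∧ ∑ j, v j ≤ 1} := by
  rintro u ⟨hu₀, hu₁⟩ v ⟨hv₀, hv₁⟩ a b ha hb hab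
  simp only [mem_ofPred_eq, Pi.add_apply, Pi.smul_apply, smul_eq_mul, sum_add_distrib,
    ← mul_sum]
  refine ⟨fun j => by have := hu₀ j; have := hv₀ j; positivity, ?_⟩
  nlinarith

lemma setOf_nonneg_sum_le_one_subset_convexHull [DecidableEq ι] {s : Set (ι → ℝ)}
    (h₀ : 0 ∈ s) (hs : ∀ i, Pi.single i 1 ∈ s) :
    {v : ι → ℝ | (∀ j, 0 ≤ v j) ∧ ∑ j, v j ≤ 1} ⊆ convexHull ℝ s := by
  rintro v ⟨hv₀, hv₁⟩
  -- `v` is the barycentre of `0` and the `Pi.single i 1` with weights `1 - ∑ v` and `v i`.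
  let w : Option ι → ℝ := fun o => o.elim (1 - ∑ j, v j) v
  let z : Option ι → ι → ℝ := fun o => o.elim 0 fun i => Pi.single i 1
  have hv : ∑ o, w o • z o = v := by
    simp [w, z, Fintype.sum_option, ← pi_eq_sum_univ']
  rw [← hv]
  refine (convex_convexHull ℝ s).sum_mem (fun o _ => ?_) ?_ fun o _ => subset_convexHull ℝ s ?_
  · cases o <;> simp [w, sub_nonneg, hv₁, hv₀]
  · simp [w, Fintype.sum_option]
  · cases o <;> simp [z, h₀, hs]

end Simplex

lemma exists_mem_Icc_succ_of_mem_Icc {X : Type*} [LinearOrder X] {a : ℕ → X} {N : ℕ}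
    (hN : 0 < N) (ha : a 0 ≤ a 1) {x : X} (hx : x ∈ Icc (a 0) (a N)) :
    ∃ i < N, x ∈ Icc (a i) (a (i + 1)) := by
  rcases eq_or_lt_of_le hx.1 with rfl | hx₀
  · exact ⟨0, hN, left_mem_Icc.2 ha⟩
  · obtain ⟨i, hi, hxi⟩ := mem_iUnion₂.1 (Ioc_subset_biUnion_Ioc N a ⟨hx₀, hx.2⟩)
    exact ⟨i, Finset.mem_range.1 hi, Ioc_subset_Icc_self hxi⟩

lemma sum_le_add_of_le_ite_add_ite {ι : Type*} [DecidableEq ι] {s : Finset ι} {f : ι → ℝ}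
    {p q : ι} {a b : ℝ} (ha : 0 ≤ a) (hb : 0 ≤ b)
    (h : ∀ j ∈ s, f j ≤ (if j = p then a else 0) + (if j = q then b else 0)) :
    ∑ j ∈ s, f j ≤ a + b := by
  refine (sum_le_sum h).trans ?_
  rw [sum_add_distrib, sum_ite_eq', sum_ite_eq']
  gcongr <;> split_ifs <;> linarith

section Knots

variable {κ : ℕ → ℝ} {m i j : ℕ}

lemma knot_le (hκ : StrictMonoOn κ (Set.Iic m)) (hij : i ≤ j) (hjm : j ≤ m) : κ i ≤ κ j :=
  hκ.monotoneOn (Set.mem_Iic.2 (hij.trans hjm)) (Set.mem_Iic.2 hjm) hij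

lemma knot_sub_pos (hκ : StrictMonoOn κ (Set.Iic m)) (hij : i < j) (hjm : j ≤ m) :
    0 < κ j - κ i :=
  sub_pos.2 <| hκ (Set.mem_Iic.2 (hij.le.trans hjm)) (Set.mem_Iic.2 hjm) hij

end Knots

noncomputable def hat (κ : ℕ → ℝ) (m j : ℕ) (x : ℝ) : ℝ :=
  if j < m then
    min (max (x - κ (j - 1)) 0 / (κ j - κ (j - 1))) (max (κ (j + 1) - x) 0 / (κ (j + 1) - κ j))
  else max (x - κ (j - 1)) 0 / (κ j - κ (j - 1))

namespace hat

variable {κ : ℕ → ℝ} {m i j : ℕ} {x : ℝ}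

lemma le_left : hat κ m j x ≤ max (x - κ (j - 1)) 0 / (κ j - κ (j - 1)) := by
  unfold hat
  split_ifs
  exacts [min_le_left _ _, le_rfl]

lemma le_right (hj : j < m) : hat κ m j x ≤ max (κ (j + 1) - x) 0 / (κ (j + 1) - κ j) := by
  rw [hat, if_pos hj]
  exact min_le_right _ _

lemma nonneg (hκ : StrictMonoOn κ (Set.Iic m)) (hj₁ : 1 ≤ j) (hjm : j ≤ m) (x : ℝ) :
    0 ≤ hat κ m j x := by
  have hd := knot_sub_pos hκ (Nat.sub_lt_self one_pos hj₁) hjm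
  unfold hat
  split_ifs with hj
  · have := knot_sub_pos hκ (Nat.lt_succ_self j) hj
    positivity
  · positivity

lemma eq_zero_of_le_left (hκ : StrictMonoOn κ (Set.Iic m)) (hj₁ : 1 ≤ j) (hjm : j ≤ m)
    (hx : x ≤ κ (j - 1)) : hat κ m j x = 0 :=
  le_antisymm (le_left.trans_eq <| by rw [max_eq_right (by linarith), zero_div])
    (nonneg hκ hj₁ hjm x)

lemma eq_zero_of_right_le (hκ : StrictMonoOn κ (Set.Iic m)) (hj₁ : 1 ≤ j) (hjm : j < m)
    (hx : κ (j + 1) ≤ x) : hat κ m j x = 0 :=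
  le_antisymm ((le_right hjm).trans_eq <| by rw [max_eq_right (by linarith), zero_div])
    (nonneg hκ hj₁ hjm.le x)

lemma apply_knot (hκ : StrictMonoOn κ (Set.Iic m)) (hj₁ : 1 ≤ j) (hjm : j ≤ m) (him : i ≤ m) :
    hat κ m j (κ i) = if j = i then 1 else 0 := by
  rcases lt_trichotomy i j with hij | rfl | hij
  · rw [if_neg hij.ne', eq_zero_of_le_left hκ hj₁ hjm (knot_le hκ (by omega) (by omega))]
  · have hd := knot_sub_pos hκ (Nat.sub_lt_self one_pos hj₁) hjm
    rw [if_pos rfl, hat]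
    split_ifs with hi
    · have := knot_sub_pos hκ (Nat.lt_succ_self i) hi
      rw [max_eq_left hd.le, max_eq_left this.le, div_self hd.ne', div_self this.ne', min_self]
    · rw [max_eq_left hd.le, div_self hd.ne']
  · rw [if_neg hij.ne, eq_zero_of_right_le hκ hj₁ (by omega) (knot_le hκ hij him)]

lemma le_ite_add_ite_of_mem_Icc (hκ : StrictMonoOn κ (Set.Iic m)) (hi : i < m)
    (hx : x ∈ Icc (κ i) (κ (i + 1))) (hj₁ : 1 ≤ j) (hjm : j ≤ m) :
    hat κ m j x ≤ (if j = i then (κ (i + 1) - x) / (κ (i + 1) - κ i) else 0) +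
      (if j = i + 1 then (x - κ i) / (κ (i + 1) - κ i) else 0) := by
  rcases lt_trichotomy j i with hji | rfl | hij
  · rw [if_neg hji.ne, if_neg (by omega), add_zero, eq_zero_of_right_le hκ hj₁ (by omega)
      ((knot_le hκ hji hi.le).trans hx.1)]
  · rw [if_pos rfl, if_neg (by omega), add_zero, ← max_eq_left (sub_nonneg.2 hx.2)]
    exact le_right hi
  rcases eq_or_lt_of_le (Nat.succ_le_of_lt hij) with rfl | hij
  · rw [if_neg (by omega), if_pos rfl, zero_add, ← max_eq_left (sub_nonneg.2 hx.1)]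
    exact le_left
  · rw [if_neg (by omega), if_neg (by omega), add_zero, eq_zero_of_le_left hκ hj₁ hjm
      (hx.2.trans (knot_le hκ (by omega) (by omega)))]

lemma sum_le_one (hκ : StrictMonoOn κ (Set.Iic m)) (hm : 0 < m) (hx : x ∈ Icc (κ 0) (κ m)) :
    ∑ j ∈ range m, hat κ m (j + 1) x ≤ 1 := by
  obtain ⟨i, hi, hxi⟩ :=
    exists_mem_Icc_succ_of_mem_Icc hm (knot_le hκ zero_le_one hm) hx
  have hd := knot_sub_pos hκ (Nat.lt_succ_self i) hi
  rw [range_eq_Ico, sum_Ico_add' (fun j => hat κ m j x)]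
  calc _ ≤ (κ (i + 1) - x) / (κ (i + 1) - κ i) + (x - κ i) / (κ (i + 1) - κ i) :=
        sum_le_add_of_le_ite_add_ite (div_nonneg (by linarith [hxi.2]) hd.le)
          (div_nonneg (by linarith [hxi.1]) hd.le) fun j hj =>
          le_ite_add_ite_of_mem_Icc hκ hi hxi (by simp at hj; omega) (by simp at hj; omega)
    _ = 1 := by
      rw [← add_div, div_eq_one_iff_eq hd.ne']
      ring

end hat

theorem stmt_4_general (m : ℕ) (hm : 1 ≤ m) (κ : ℕ → ℝ)
    (hκ : ∀ i < m, κ i < κ (i + 1))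
    (X : Set ℝ)
    (hknots : ∀ i ≤ m, κ i ∈ X)
    (hsub : X ⊆ Icc (κ 0) (κ m))
    (g : ℕ → ℝ → ℝ)
    (hgj : ∀ j, 1 ≤ j → j < m → ∀ x,
      g j x = min (max (x - κ (j - 1)) 0 / (κ j - κ (j - 1)))
        (max (κ (j + 1) - x) 0 / (κ (j + 1) - κ j)))
    (hgm : ∀ x, g m x = max (x - κ (m - 1)) 0 / (κ m - κ (m - 1))) :
    convexHull ℝ ((fun x => fun j : Fin m => g (j.val + 1) x) '' X)
      = {v : Fin m → ℝ | (∀ j, 0 ≤ v j) ∧ ∑ j, v j ≤ 1} := by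
  have hmono : StrictMonoOn κ (Set.Iic m) := strictMonoOn_Iic_of_lt_succ hκ
  have hg : (fun x => fun j : Fin m => g (j.val + 1) x) =
      fun x (j : Fin m) => hat κ m (j + 1) x := by
    funext x j
    rcases eq_or_lt_of_le (Nat.succ_le_of_lt j.isLt) with hj | hj
    · have hgm := hgm x
      rw [← hj] at hgm
      rwa [hat, if_neg (by omega)]
    · rw [hat, if_pos hj, hgj _ (Nat.le_add_left 1 j) hj]
  rw [hg]
  refine (convexHull_min ?_ convex_setOf_nonneg_sum_le_one).antisymm
    (setOf_nonneg_sum_le_one_subset_convexHull ⟨κ 0, hknots 0 m.zero_le, ?_⟩ fun j =>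
      ⟨κ (j + 1), hknots _ j.isLt, ?_⟩)
  · rintro _ ⟨x, hx, rfl⟩
    refine ⟨fun j => hat.nonneg hmono (Nat.le_add_left 1 j) j.isLt x, ?_⟩
    rw [Fin.sum_univ_eq_sum_range (fun j => hat κ m (j + 1) x)]
    exact hat.sum_le_one hmono hm (hsub hx)
  · funext k
    simp [hat.apply_knot hmono (Nat.le_add_left 1 k) k.isLt m.zero_le]
  · funext k
    simp [hat.apply_knot hmono (Nat.le_add_left 1 k) k.isLt j.isLt, Pi.single_apply, Fin.ext_iff]

theorem stmt_4 (m : ℕ) (hm : 1 ≤ m) (κ : ℕ → ℝ)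
    (hκ : ∀ i < m, κ i < κ (i + 1))
    (X : Set ℝ)
    (hknots : ∀ i ≤ m, κ i ∈ X)
    (hsub : X ⊆ Icc (κ 0) (κ m))
    (hpieces : ∀ i, 1 ≤ i → i ≤ m →
      X ∩ Icc (κ (i - 1)) (κ i) = Icc (κ (i - 1)) (κ i) ∨
      X ∩ Icc (κ (i - 1)) (κ i) = {κ (i - 1), κ i})
    (g : ℕ → ℝ → ℝ)
    (hg0 : ∀ x, g 0 x = max (κ 1 - x) 0 / (κ 1 - κ 0))
    (hgj : ∀ j, 1 ≤ j → j < m → ∀ x,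
      g j x = min (max (x - κ (j - 1)) 0 / (κ j - κ (j - 1)))
        (max (κ (j + 1) - x) 0 / (κ (j + 1) - κ j)))
    (hgm : ∀ x, g m x = max (x - κ (m - 1)) 0 / (κ m - κ (m - 1))) :
    convexHull ℝ ((fun x => fun j : Fin m => g (j.val + 1) x) '' X)
      = {v : Fin m → ℝ | (∀ j, 0 ≤ v j) ∧ ∑ j, v j ≤ 1} :=
  stmt_4_general m hm κ hκ X hknots hsub g hgj hgm
end

section
/- Let X ⊆ ℝ be a finite union of compact intervals ⋃_{l=1}^{k} [κ̲_l, κ̄_l], μ a Borel probability measure on X, and let 𝒢 be the collection of CPWA hat functions associated with knots κ_{l,1} < ⋯ < κ_{l,m_l} within each interval (with κ_{l,1} = κ̲_l, κ_{l,m_l} = κ̄_l when the interval is nondegenerate). Let [μ]_𝒢 be the set of Borel probability measures ν on X such that ∫ g dν = ∫ g dμ for every g ∈ 𝒢. Then sup_{ν ∈ [μ]_𝒢} W₁(μ, ν) ≤ ∑_{l=1}^{k} μ([κ̲_l, κ̄_l]) · max_{1 ≤ j ≤ m_l} (κ_{l,(j+1)∧m_l} − κ_{l,(j−1)∨1}).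 -/
/-!
Split `μ` and `ν` along the partition of unity formed by the hats: `μ_j = g_j μ`, `ν_j = g_j ν`.
The moment conditions (and `∑ g_j = 1` for `j = 0`) say that `μ_j` and `ν_j` have the same mass
`a_j`, so `γ = ∑ a_j⁻¹ μ_j ⊗ ν_j` couples `μ` and `ν`. If `c_j` is a knot of the `l`-th interval,
then `X` meets the support of `g_j` only inside `[c_{(j-1)∨s_l}, c_{(j+1)∧e_l}]`, so the `j`-th
term costs at most `a_j` times the length of that cell, and the `a_j` of the `l`-th interval add
up to at most `μ(I_l)`.
-/

open MeasureTheory Set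
open scoped ENNReal

namespace MeasureTheory.Measure

variable {α ι : Type*} [MeasurableSpace α]

theorem inv_measure_univ_mul_smul {ρ : Measure α} (h : ρ univ ≠ ∞) :
    ((ρ univ)⁻¹ * ρ univ) • ρ = ρ := by
  rcases eq_or_ne (ρ univ) 0 with h0 | h0
  · rw [measure_univ_eq_zero.1 h0, smul_zero]
  · rw [ENNReal.inv_mul_cancel h0 h, one_smul]

/-- A coupling of `∑ i ∈ t, μ i` and `∑ i ∈ t, ν i` as soon as `ν i univ = μ i univ < ∞`. -/
noncomputable def sumIndepCoupling (t : Finset ι) (μ ν : ι → Measure α) : Measure (α × α) :=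
  ∑ i ∈ t, (μ i univ)⁻¹ • (μ i).prod (ν i)

variable {t : Finset ι} {μ ν : ι → Measure α} [∀ i, SFinite (ν i)]

theorem map_fst_sumIndepCoupling (hν : ∀ i ∈ t, ν i univ = μ i univ)
    (hfin : ∀ i ∈ t, μ i univ ≠ ∞) :
    (sumIndepCoupling t μ ν).map Prod.fst = ∑ i ∈ t, μ i := by
  rw [sumIndepCoupling, map_finset_sum measurable_fst.aemeasurable]
  refine Finset.sum_congr rfl fun i hi => ?_
  rw [Measure.map_smul, map_fst_prod, hν i hi, smul_smul, inv_measure_univ_mul_smul (hfin i hi)]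

theorem map_snd_sumIndepCoupling (hν : ∀ i ∈ t, ν i univ = μ i univ)
    (hfin : ∀ i ∈ t, μ i univ ≠ ∞) :
    (sumIndepCoupling t μ ν).map Prod.snd = ∑ i ∈ t, ν i := by
  rw [sumIndepCoupling, map_finset_sum measurable_snd.aemeasurable]
  refine Finset.sum_congr rfl fun i hi => ?_
  rw [Measure.map_smul, map_snd_prod, smul_smul, ← hν i hi,
    inv_measure_univ_mul_smul (hν i hi ▸ hfin i hi)]

theorem lintegral_sumIndepCoupling_le {f : α × α → ℝ≥0∞} {S : ι → Set α} {C : ι → ℝ≥0∞}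
    (hμS : ∀ i ∈ t, ∀ᵐ x ∂μ i, x ∈ S i) (hνS : ∀ i ∈ t, ∀ᵐ y ∂ν i, y ∈ S i)
    (hf : ∀ i ∈ t, ∀ x ∈ S i, ∀ y ∈ S i, f (x, y) ≤ C i)
    (hν : ∀ i ∈ t, ν i univ = μ i univ) :
    ∫⁻ p, f p ∂sumIndepCoupling t μ ν ≤ ∑ i ∈ t, μ i univ * C i := by
  rw [sumIndepCoupling, lintegral_finsetSum_measure]
  refine Finset.sum_le_sum fun i hi => ?_
  have hbound : ∀ᵐ p ∂(μ i).prod (ν i), f p ≤ C i := by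
    filter_upwards [quasiMeasurePreserving_fst.ae (hμS i hi),
      quasiMeasurePreserving_snd.ae (hνS i hi)] with p h1 h2
    exact hf i hi p.1 h1 p.2 h2
  calc ∫⁻ p, f p ∂(μ i univ)⁻¹ • (μ i).prod (ν i)
      = (μ i univ)⁻¹ * ∫⁻ p, f p ∂(μ i).prod (ν i) := by
        rw [lintegral_smul_measure, smul_eq_mul]
    _ ≤ (μ i univ)⁻¹ * ∫⁻ _, C i ∂(μ i).prod (ν i) :=
        mul_le_mul_right (lintegral_mono_ae hbound) _
    _ = ((μ i univ)⁻¹ * μ i univ) * μ i univ * C i := by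
        rw [lintegral_const, ← univ_prod_univ, prod_prod, hν i hi]; ring
    _ ≤ 1 * μ i univ * C i := by gcongr; exact ENNReal.inv_mul_le_one _
    _ = μ i univ * C i := by rw [one_mul]

theorem sum_withDensity_eq_self {μ : Measure α} {f : ι → α → ℝ≥0∞}
    (hf : ∀ i ∈ t, Measurable (f i)) (h : ∀ᵐ x ∂μ, ∑ i ∈ t, f i x = 1) :
    ∑ i ∈ t, μ.withDensity (f i) = μ := by
  ext A hA
  simp only [finsetSum_apply, withDensity_apply _ hA]
  rw [← lintegral_finsetSum _ hf, lintegral_congr_ae (ae_restrict_of_ae h), setLIntegral_one]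

end MeasureTheory.Measure

theorem ENNReal.eq_of_sum_eq_of_forall_ne {ι : Type*} [DecidableEq ι] {t : Finset ι}
    {a b : ι → ℝ≥0∞} {i₀ : ι} (hi₀ : i₀ ∈ t) (h : ∑ i ∈ t, a i = ∑ i ∈ t, b i)
    (hfin : ∑ i ∈ t, a i ≠ ∞) (hab : ∀ i ∈ t, i ≠ i₀ → a i = b i) : a i₀ = b i₀ := by
  have hrest : ∑ i ∈ t.erase i₀, b i = ∑ i ∈ t.erase i₀, a i :=
    Finset.sum_congr rfl fun i hi =>
      (hab i (Finset.mem_of_mem_erase hi) (Finset.ne_of_mem_erase hi)).symm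
  rw [← Finset.add_sum_erase t a hi₀, ← Finset.add_sum_erase t b hi₀, hrest] at h
  rw [← Finset.add_sum_erase t a hi₀] at hfin
  exact (ENNReal.add_left_inj (ENNReal.add_ne_top.1 hfin).2).1 h

theorem ENNReal.toReal_sum_mul_ofReal {ι : Type*} {t : Finset ι} {m : ι → ℝ≥0∞} {d : ι → ℝ}
    (hm : ∀ i ∈ t, m i ≠ ∞) (hd : ∀ i ∈ t, 0 ≤ d i) :
    (∑ i ∈ t, m i * ENNReal.ofReal (d i)).toReal = ∑ i ∈ t, (m i).toReal * d i := by
  rw [ENNReal.toReal_sum fun i hi => ENNReal.mul_ne_top (hm i hi) ENNReal.ofReal_ne_top]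
  exact Finset.sum_congr rfl fun i hi => by
    rw [ENNReal.toReal_mul, ENNReal.toReal_ofReal (hd i hi)]

theorem le_sSup_of_mem_Icc {F : ℕ → ℝ} {a b j : ℕ} (ha : a ≤ j) (hb : j ≤ b) :
    F j ≤ sSup {r | ∃ i, a ≤ i ∧ i ≤ b ∧ r = F i} :=
  le_csSup (((Set.finite_Icc a b).image F).bddAbove.mono <| by
    rintro _ ⟨i, hai, hib, rfl⟩
    exact ⟨i, ⟨hai, hib⟩, rfl⟩) ⟨j, ha, hb, rfl⟩

theorem monotoneOn_Iic_of_lt_succ {β : Type*} [Preorder β] {f : ℕ → β} {n : ℕ}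
    (hf : ∀ i < n, f i < f (i + 1)) : MonotoneOn f (Iic n) :=
  (strictMonoOn_Iic_of_lt_succ fun m hm => by simpa using hf m hm).monotoneOn

theorem sInf_transportCost_le {μ ν : Measure ℝ} {γ : Measure (ℝ × ℝ)} [IsProbabilityMeasure γ]
    (hfst : γ.map Prod.fst = μ) (hsnd : γ.map Prod.snd = ν) {B : ℝ≥0∞} (hB : B ≠ ∞)
    (hγ : ∫⁻ p, ENNReal.ofReal |p.1 - p.2| ∂γ ≤ B) :
    sInf {r | ∃ γ : Measure (ℝ × ℝ), IsProbabilityMeasure γ ∧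
        γ.map Prod.fst = μ ∧ γ.map Prod.snd = ν ∧ r = ∫ p, |p.1 - p.2| ∂γ} ≤ B.toReal := by
  refine (csInf_le ?_ ?_).trans (b := ∫ p, |p.1 - p.2| ∂γ) ?_
  · refine ⟨0, ?_⟩
    rintro _ ⟨γ', -, -, -, rfl⟩
    exact integral_nonneg fun _ => abs_nonneg _
  · exact ⟨γ, ‹_›, hfst, hsnd, rfl⟩
  rw [integral_eq_lintegral_of_nonneg_ae (ae_of_all _ fun _ => abs_nonneg _)
    (by fun_prop : Measurable fun p : ℝ × ℝ => |p.1 - p.2|).aestronglyMeasurable]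
  exact ENNReal.toReal_mono hB hγ

section KnotHat

variable {c : ℕ → ℝ} {M j : ℕ} {x : ℝ}

noncomputable def rampUp (c : ℕ → ℝ) (j : ℕ) (x : ℝ) : ℝ :=
  max (x - c (j - 1)) 0 / (c j - c (j - 1))

noncomputable def rampDown (c : ℕ → ℝ) (j : ℕ) (x : ℝ) : ℝ :=
  max (c (j + 1) - x) 0 / (c (j + 1) - c j)

noncomputable def knotHat (c : ℕ → ℝ) (M j : ℕ) (x : ℝ) : ℝ :=
  if j = 0 then rampDown c 0 x
  else if j < M then min (rampUp c j x) (rampDown c j x) else rampUp c j x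

/-- On `[c 0, c M]` this is `∑ i ∈ Finset.Icc j M, knotHat c M i`. -/
noncomputable def knotHatTail (c : ℕ → ℝ) (M j : ℕ) (x : ℝ) : ℝ :=
  if j = 0 then 1 else if M < j then 0 else min (rampUp c j x) 1

theorem rampUp_nonneg (h : c (j - 1) ≤ c j) : 0 ≤ rampUp c j x :=
  div_nonneg (le_max_right _ _) (sub_nonneg.2 h)

theorem rampDown_nonneg (h : c j ≤ c (j + 1)) : 0 ≤ rampDown c j x :=
  div_nonneg (le_max_right _ _) (sub_nonneg.2 h)

theorem rampUp_eq_zero (hx : x ≤ c (j - 1)) : rampUp c j x = 0 := by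
  simp [rampUp, max_eq_right (sub_nonpos.2 hx)]

theorem rampDown_eq_zero (hx : c (j + 1) ≤ x) : rampDown c j x = 0 := by
  simp [rampDown, max_eq_right (sub_nonpos.2 hx)]

theorem lt_of_rampUp_pos (h : 0 < rampUp c j x) : c (j - 1) < x := by
  by_contra! hx
  exact h.ne' (rampUp_eq_zero hx)

theorem lt_of_rampDown_pos (h : 0 < rampDown c j x) : x < c (j + 1) := by
  by_contra! hx
  exact h.ne' (rampDown_eq_zero hx)

theorem one_le_rampUp (h : c (j - 1) < c j) (hx : c j ≤ x) : 1 ≤ rampUp c j x := by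
  rw [rampUp, one_le_div (sub_pos.2 h)]
  exact le_max_of_le_left (by linarith)

theorem rampUp_le_one (h : c (j - 1) < c j) (hx : x ≤ c j) : rampUp c j x ≤ 1 := by
  rw [rampUp, div_le_one (sub_pos.2 h)]
  exact max_le (by linarith) (by linarith)

theorem one_le_rampDown (h : c j < c (j + 1)) (hx : x ≤ c j) : 1 ≤ rampDown c j x := by
  rw [rampDown, one_le_div (sub_pos.2 h)]
  exact le_max_of_le_left (by linarith)

theorem rampDown_le_one (h : c j < c (j + 1)) (hx : c j ≤ x) : rampDown c j x ≤ 1 := by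
  rw [rampDown, div_le_one (sub_pos.2 h)]
  exact max_le (by linarith) (by linarith)

theorem min_rampUp_succ_add_min_rampDown (h : c j < c (j + 1)) :
    min (rampUp c (j + 1) x) 1 + min (rampDown c j x) 1 = 1 := by
  have h' : c (j + 1 - 1) < c (j + 1) := by simpa using h
  rcases le_total x (c j) with hx | hx
  · rw [rampUp_eq_zero (by simpa using hx), min_eq_right (one_le_rampDown h hx)]
    norm_num
  rcases le_total x (c (j + 1)) with hx' | hx'
  · rw [min_eq_left (rampUp_le_one h' hx'), min_eq_left (rampDown_le_one h hx), rampUp,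
      rampDown, Nat.add_sub_cancel, max_eq_left (by linarith), max_eq_left (by linarith),
      ← add_div, div_eq_one_iff_eq (sub_pos.2 h).ne']
    ring
  · rw [rampDown_eq_zero hx', min_eq_right (one_le_rampUp h' hx')]
    norm_num

theorem knot_sub_one_lt (hc : ∀ i < M, c i < c (i + 1)) (hj0 : 0 < j) (hj : j ≤ M) :
    c (j - 1) < c j := by
  simpa [Nat.sub_add_cancel hj0] using hc (j - 1) (by omega)

theorem knotHat_eq_knotHatTail_sub (hc : ∀ i < M, c i < c (i + 1)) (hM : 1 ≤ M) (hj : j ≤ M)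
    (hx : x ∈ Icc (c 0) (c M)) :
    knotHat c M j x = knotHatTail c M j x - knotHatTail c M (j + 1) x := by
  rcases Nat.eq_zero_or_pos j with rfl | hj0
  · have hsucc := min_rampUp_succ_add_min_rampDown (x := x) (hc 0 hM)
    rw [min_eq_left (rampDown_le_one (hc 0 hM) hx.1)] at hsucc
    simp only [knotHat, knotHatTail, if_true, zero_add, one_ne_zero, if_false,
      show ¬M < 1 by omega]
    linarith
  have hprev := knot_sub_one_lt hc hj0 hj
  rcases hj.lt_or_eq with hjM | rfl
  · have hsucc := min_rampUp_succ_add_min_rampDown (x := x) (hc j hjM)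
    simp only [knotHat, knotHatTail, hj0.ne', hjM, Nat.succ_ne_zero, if_false, if_true,
      show ¬M < j by omega, show ¬M < j + 1 by omega]
    rcases le_total x (c j) with hxj | hxj
    · rw [min_eq_right (one_le_rampDown (hc j hjM) hxj)] at hsucc
      rw [min_eq_left ((rampUp_le_one hprev hxj).trans (one_le_rampDown (hc j hjM) hxj)),
        min_eq_left (rampUp_le_one hprev hxj)]
      linarith
    · rw [min_eq_left (rampDown_le_one (hc j hjM) hxj)] at hsucc
      rw [min_eq_right ((rampDown_le_one (hc j hjM) hxj).trans (one_le_rampUp hprev hxj)),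
        min_eq_right (one_le_rampUp hprev hxj)]
      linarith
  · simp [knotHat, knotHatTail, hj0.ne', min_eq_left (rampUp_le_one hprev hx.2)]

theorem sum_knotHat_eq_one (hc : ∀ i < M, c i < c (i + 1)) (hM : 1 ≤ M)
    (hx : x ∈ Icc (c 0) (c M)) : ∑ j ∈ Finset.range (M + 1), knotHat c M j x = 1 := by
  rw [Finset.sum_congr rfl fun j hj => knotHat_eq_knotHatTail_sub hc hM
    (Nat.lt_succ_iff.1 (Finset.mem_range.1 hj)) hx, Finset.sum_range_sub']
  simp [knotHatTail]

theorem knotHat_nonneg (hc : ∀ i < M, c i < c (i + 1)) (hM : 1 ≤ M) (hj : j ≤ M) :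
    0 ≤ knotHat c M j x := by
  unfold knotHat
  split_ifs with h0 hjM
  · exact rampDown_nonneg (hc 0 hM).le
  · exact le_min (rampUp_nonneg (knot_sub_one_lt hc (Nat.pos_of_ne_zero h0) hj).le)
      (rampDown_nonneg (hc j hjM).le)
  · exact rampUp_nonneg (knot_sub_one_lt hc (Nat.pos_of_ne_zero h0) hj).le

theorem knotHat_pos (h : 0 < knotHat c M j x) :
    (0 < j → c (j - 1) < x) ∧ (j < M → x < c (j + 1)) := by
  unfold knotHat at h
  split_ifs at h with h0 hjM
  · subst h0
    exact ⟨by omega, fun _ => lt_of_rampDown_pos h⟩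
  · exact ⟨fun _ => lt_of_rampUp_pos (lt_min_iff.1 h).1,
      fun _ => lt_of_rampDown_pos (lt_min_iff.1 h).2⟩
  · exact ⟨fun _ => lt_of_rampUp_pos h, by omega⟩

theorem measurable_knotHat : Measurable (knotHat c M j) := by
  unfold knotHat rampUp rampDown
  split_ifs <;> fun_prop

end KnotHat

/-- Interval `l < k` carries the knots `c (s l), …, c (e l)`. -/
structure IsKnotBlocks (k M : ℕ) (s e : ℕ → ℕ) : Prop where
  one_le : 1 ≤ k
  start : s 0 = 0
  last : e (k - 1) = M
  le : ∀ l < k, s l ≤ e l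
  succ : ∀ l, l + 1 < k → s (l + 1) = e l + 1

namespace IsKnotBlocks

variable {k M : ℕ} {s e : ℕ → ℕ} {l l' : ℕ}

theorem lt_start (hb : IsKnotBlocks k M s e) (hll' : l < l') (hl' : l' < k) : e l < s l' := by
  induction l', hll' using Nat.le_induction with
  | base => rw [hb.succ l hl']; omega
  | succ n hn ih =>
    have := hb.le n (by omega)
    have := ih (by omega)
    rw [hb.succ n hl']
    omega

theorem le_last (hb : IsKnotBlocks k M s e) (hl : l < k) : e l ≤ M := by
  rcases (Nat.le_sub_one_of_lt hl).lt_or_eq with h | rfl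
  · have := hb.lt_start h (by omega)
    have := hb.le (k - 1) (by omega)
    rw [hb.last] at this
    omega
  · rw [hb.last]

theorem sum_range_eq_sum_blocks {β : Type*} [AddCommMonoid β] (hb : IsKnotBlocks k M s e)
    (f : ℕ → β) :
    ∑ j ∈ Finset.range (M + 1), f j
      = ∑ l ∈ Finset.range k, ∑ j ∈ Finset.Icc (s l) (e l), f j := by
  have hfirst : ∀ n, 1 ≤ n → n ≤ k →
      ∑ l ∈ Finset.range n, ∑ j ∈ Finset.Icc (s l) (e l), f j
        = ∑ j ∈ Finset.range (e (n - 1) + 1), f j := by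
    intro n hn
    induction n, hn using Nat.le_induction with
    | base =>
      rw [Finset.sum_range_one, hb.start, Finset.range_eq_Ico, Finset.Ico_add_one_right_eq_Icc]
      exact fun _ => rfl
    | succ n hn ih =>
      intro hnk
      have hsn : s n = e (n - 1) + 1 := by
        simpa [Nat.sub_add_cancel hn] using hb.succ (n - 1) (by omega)
      rw [Finset.sum_range_succ, ih (by omega), Nat.add_sub_cancel,
        ← Finset.Ico_add_one_right_eq_Icc, ← hsn, Finset.range_eq_Ico, Finset.range_eq_Ico]
      exact Finset.sum_Ico_consecutive f (Nat.zero_le _) (by have := hb.le n (by omega); omega)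
  rw [hfirst k hb.one_le le_rfl, hb.last]

theorem biUnion_subset_Icc {c : ℕ → ℝ} (hb : IsKnotBlocks k M s e) (hc : MonotoneOn c (Iic M)) :
    ⋃ l ∈ Finset.range k, Icc (c (s l)) (c (e l)) ⊆ Icc (c 0) (c M) := by
  simp only [iUnion_subset_iff, Finset.mem_range]
  intro l hl x hx
  have hel := hb.le_last hl
  have hsl := hb.le l hl
  exact ⟨(hc (mem_Iic.2 (Nat.zero_le M)) (mem_Iic.2 (by omega)) (Nat.zero_le _)).trans hx.1,
    hx.2.trans (hc (mem_Iic.2 hel) (mem_Iic.2 le_rfl) hel)⟩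

/-- `hleft` and `hright` say that `x` lies in the support of the hat at `c j`. -/
theorem mem_adjacent_Icc {c : ℕ → ℝ} {j : ℕ} {x : ℝ} (hb : IsKnotBlocks k M s e)
    (hc : MonotoneOn c (Iic M)) (hl : l < k) (hj : j ∈ Finset.Icc (s l) (e l)) (hl' : l' < k)
    (hx : x ∈ Icc (c (s l')) (c (e l'))) (hleft : 0 < j → c (j - 1) < x)
    (hright : j < M → x < c (j + 1)) :
    x ∈ Icc (c (max (j - 1) (s l))) (c (min (j + 1) (e l))) := by
  rw [Finset.mem_Icc] at hj
  have hcle : ∀ {i i'}, i ≤ i' → i' ≤ M → c i ≤ c i' := fun h h' =>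
    hc (mem_Iic.2 (h.trans h')) (mem_Iic.2 h') h
  have hel := hb.le_last hl
  have hel' := hb.le_last hl'
  obtain rfl : l' = l := by
    rcases lt_trichotomy l' l with h | h | h
    · have := hb.lt_start h hl
      linarith [hx.2, hcle (show e l' ≤ j - 1 by omega) (by omega), hleft (by omega)]
    · exact h
    · have := hb.lt_start h hl'
      have := hb.le l' hl'
      linarith [hx.1, hcle (show j + 1 ≤ s l' by omega) (by omega), hright (by omega)]
  constructor
  · rcases le_total (j - 1) (s l') with h | h
    · rw [max_eq_right h]; exact hx.1
    · rw [max_eq_left h]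
      rcases Nat.eq_zero_or_pos j with rfl | hj0
      · exact hx.1.trans' (hcle (by omega) (by omega))
      · exact (hleft hj0).le
  · rcases le_total (j + 1) (e l') with h | h
    · rw [min_eq_left h]; exact (hright (by omega)).le
    · rw [min_eq_right h]; exact hx.2

end IsKnotBlocks

section HatPiece

variable {c : ℕ → ℝ} {M j k l : ℕ} {s e : ℕ → ℕ} {ρ μ ν : Measure ℝ}

noncomputable def hatPiece (ρ : Measure ℝ) (c : ℕ → ℝ) (M j : ℕ) : Measure ℝ :=
  ρ.withDensity fun x => ENNReal.ofReal (knotHat c M j x)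

instance [SFinite ρ] : SFinite (hatPiece ρ c M j) := by
  unfold hatPiece; infer_instance

theorem sum_hatPiece (hc : ∀ i < M, c i < c (i + 1)) (hM : 1 ≤ M)
    (hρ : ∀ᵐ x ∂ρ, x ∈ Icc (c 0) (c M)) :
    ∑ j ∈ Finset.range (M + 1), hatPiece ρ c M j = ρ := by
  refine Measure.sum_withDensity_eq_self (fun j _ => measurable_knotHat.ennreal_ofReal) ?_
  filter_upwards [hρ] with x hx
  rw [← ENNReal.ofReal_sum_of_nonneg fun j hj => knotHat_nonneg hc hM
    (Nat.lt_succ_iff.1 (Finset.mem_range.1 hj)), sum_knotHat_eq_one hc hM hx, ENNReal.ofReal_one]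

theorem hatPiece_apply_univ_le (hc : ∀ i < M, c i < c (i + 1)) (hM : 1 ≤ M)
    (hρ : ∀ᵐ x ∂ρ, x ∈ Icc (c 0) (c M)) (hj : j ≤ M) : hatPiece ρ c M j univ ≤ ρ univ := by
  conv_rhs => rw [← sum_hatPiece hc hM hρ, Measure.finsetSum_apply]
  exact Finset.single_le_sum (f := fun i => hatPiece ρ c M i univ) (fun _ _ => zero_le)
    (Finset.mem_range.2 (Nat.lt_succ_of_le hj))

theorem integral_knotHat (hc : ∀ i < M, c i < c (i + 1)) (hM : 1 ≤ M) (hj : j ≤ M) :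
    ∫ x, knotHat c M j x ∂ρ = (hatPiece ρ c M j univ).toReal := by
  rw [integral_eq_lintegral_of_nonneg_ae (ae_of_all _ fun _ => knotHat_nonneg hc hM hj)
    measurable_knotHat.aestronglyMeasurable, hatPiece, withDensity_apply _ MeasurableSet.univ,
    Measure.restrict_univ]

/-- For `j = 0` this follows from the other moments, because the hats sum to one. -/
theorem hatPiece_apply_univ_eq [IsProbabilityMeasure μ] [IsProbabilityMeasure ν]
    (hc : ∀ i < M, c i < c (i + 1)) (hM : 1 ≤ M) (hμ : ∀ᵐ x ∂μ, x ∈ Icc (c 0) (c M))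
    (hν : ∀ᵐ x ∂ν, x ∈ Icc (c 0) (c M))
    (hmom : ∀ j, 1 ≤ j → j ≤ M → ∫ x, knotHat c M j x ∂ν = ∫ x, knotHat c M j x ∂μ)
    (hj : j ≤ M) : hatPiece ν c M j univ = hatPiece μ c M j univ := by
  have hfin : ∀ ρ : Measure ℝ, IsProbabilityMeasure ρ → (∀ᵐ x ∂ρ, x ∈ Icc (c 0) (c M)) →
      ∀ j ≤ M, hatPiece ρ c M j univ ≠ ∞ := fun ρ _ hρ j hj =>
    ((hatPiece_apply_univ_le hc hM hρ hj).trans_lt (measure_lt_top ρ univ)).ne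
  have hpos : ∀ j, 1 ≤ j → j ≤ M → hatPiece ν c M j univ = hatPiece μ c M j univ :=
    fun j h1 hj => (ENNReal.toReal_eq_toReal_iff' (hfin ν ‹_› hν j hj) (hfin μ ‹_› hμ j hj)).1 <| by
      rw [← integral_knotHat hc hM hj, ← integral_knotHat hc hM hj, hmom j h1 hj]
  rcases Nat.eq_zero_or_pos j with rfl | hj0
  · refine ENNReal.eq_of_sum_eq_of_forall_ne (t := Finset.range (M + 1)) (by simp) ?_ ?_
      fun i hi hi0 => hpos i (Nat.pos_of_ne_zero hi0) (Nat.lt_succ_iff.1 (Finset.mem_range.1 hi))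
    · rw [← Measure.finsetSum_apply, ← Measure.finsetSum_apply, sum_hatPiece hc hM hμ,
        sum_hatPiece hc hM hν, measure_univ, measure_univ]
    · rw [← Measure.finsetSum_apply, sum_hatPiece hc hM hν]
      exact measure_ne_top ν univ
  · exact hpos j hj0 hj

theorem ae_hatPiece_mem (hb : IsKnotBlocks k M s e) (hc : MonotoneOn c (Iic M)) (hl : l < k)
    (hj : j ∈ Finset.Icc (s l) (e l))
    (hρ : ∀ᵐ x ∂ρ, x ∈ ⋃ l ∈ Finset.range k, Icc (c (s l)) (c (e l))) :
    ∀ᵐ x ∂hatPiece ρ c M j, x ∈ Icc (c (max (j - 1) (s l))) (c (min (j + 1) (e l))) := by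
  rw [hatPiece, ae_withDensity_iff measurable_knotHat.ennreal_ofReal]
  filter_upwards [hρ] with x hx hne
  obtain ⟨l', hl', hxl'⟩ := mem_iUnion₂.1 hx
  have hpos := knotHat_pos (ENNReal.ofReal_pos.1 (pos_iff_ne_zero.2 hne))
  exact hb.mem_adjacent_Icc hc hl hj (Finset.mem_range.1 hl') hxl' hpos.1 hpos.2

theorem sum_hatPiece_apply_univ_le (hb : IsKnotBlocks k M s e) (hc : ∀ i < M, c i < c (i + 1))
    (hM : 1 ≤ M) (hl : l < k)
    (hρ : ∀ᵐ x ∂ρ, x ∈ ⋃ l ∈ Finset.range k, Icc (c (s l)) (c (e l))) :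
    ∑ j ∈ Finset.Icc (s l) (e l), hatPiece ρ c M j univ ≤ ρ (Icc (c (s l)) (c (e l))) := by
  have hcm := monotoneOn_Iic_of_lt_succ hc
  have hel := hb.le_last hl
  calc ∑ j ∈ Finset.Icc (s l) (e l), hatPiece ρ c M j univ
      = ∑ j ∈ Finset.Icc (s l) (e l), hatPiece ρ c M j (Icc (c (s l)) (c (e l))) := by
        refine Finset.sum_congr rfl fun j hj => (measure_congr (ae_eq_univ.2 ?_)).symm
        refine ae_iff.1 ((ae_hatPiece_mem hb hcm hl hj hρ).mono fun x hx => ?_)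
        rw [Finset.mem_Icc] at hj
        exact ⟨(hcm (mem_Iic.2 (by omega)) (mem_Iic.2 (by omega)) (le_max_right _ _)).trans hx.1,
          hx.2.trans (hcm (mem_Iic.2 (by omega)) (mem_Iic.2 hel) (min_le_right _ _))⟩
    _ ≤ ∑ j ∈ Finset.range (M + 1), hatPiece ρ c M j (Icc (c (s l)) (c (e l))) :=
        Finset.sum_le_sum_of_subset fun j hj => by
          rw [Finset.mem_Icc] at hj
          rw [Finset.mem_range]
          omega
    _ = ρ (Icc (c (s l)) (c (e l))) := by
        rw [← Measure.finsetSum_apply,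
          sum_hatPiece hc hM (hρ.mono fun x hx => hb.biUnion_subset_Icc hcm hx)]

theorem exists_coupling_lintegral_le [IsProbabilityMeasure μ] [IsProbabilityMeasure ν]
    (hb : IsKnotBlocks k M s e) (hc : ∀ i < M, c i < c (i + 1)) (hM : 1 ≤ M)
    (hμ : ∀ᵐ x ∂μ, x ∈ ⋃ l ∈ Finset.range k, Icc (c (s l)) (c (e l)))
    (hν : ∀ᵐ x ∂ν, x ∈ ⋃ l ∈ Finset.range k, Icc (c (s l)) (c (e l)))
    (hmom : ∀ j, 1 ≤ j → j ≤ M → ∫ x, knotHat c M j x ∂ν = ∫ x, knotHat c M j x ∂μ)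
    {D : ℕ → ℝ} (hD : ∀ l < k, ∀ j ∈ Finset.Icc (s l) (e l),
      c (min (j + 1) (e l)) - c (max (j - 1) (s l)) ≤ D l) :
    ∃ γ : Measure (ℝ × ℝ), IsProbabilityMeasure γ ∧ γ.map Prod.fst = μ ∧
      γ.map Prod.snd = ν ∧ ∫⁻ p, ENNReal.ofReal |p.1 - p.2| ∂γ
        ≤ ∑ l ∈ Finset.range k, μ (Icc (c (s l)) (c (e l))) * ENNReal.ofReal (D l) := by
  have hcm := monotoneOn_Iic_of_lt_succ hc
  have hμI := hμ.mono fun x hx => hb.biUnion_subset_Icc hcm hx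
  have hνI := hν.mono fun x hx => hb.biUnion_subset_Icc hcm hx
  set t := (Finset.range k).sigma fun l => Finset.Icc (s l) (e l)
  have ht : ∀ p ∈ t, p.1 < k ∧ p.2 ∈ Finset.Icc (s p.1) (e p.1) := fun p hp =>
    ⟨Finset.mem_range.1 (Finset.mem_sigma.1 hp).1, (Finset.mem_sigma.1 hp).2⟩
  have hjM : ∀ p ∈ t, p.2 ≤ M := fun p hp =>
    (Finset.mem_Icc.1 (ht p hp).2).2.trans (hb.le_last (ht p hp).1)
  have hsum : ∀ ρ : Measure ℝ, (∀ᵐ x ∂ρ, x ∈ Icc (c 0) (c M)) →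
      ∑ p ∈ t, hatPiece ρ c M p.2 = ρ := fun ρ hρ => by
    rw [Finset.sum_sigma, ← hb.sum_range_eq_sum_blocks, sum_hatPiece hc hM hρ]
  have hmass : ∀ p ∈ t, hatPiece ν c M p.2 univ = hatPiece μ c M p.2 univ := fun p hp =>
    hatPiece_apply_univ_eq hc hM hμI hνI hmom (hjM p hp)
  have hfin : ∀ p ∈ t, hatPiece μ c M p.2 univ ≠ ∞ := fun p hp =>
    ((hatPiece_apply_univ_le hc hM hμI (hjM p hp)).trans_lt (measure_lt_top μ univ)).ne
  set γ := Measure.sumIndepCoupling t (fun p => hatPiece μ c M p.2) fun p => hatPiece ν c M p.2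
  have hfst : γ.map Prod.fst = μ := by
    rw [Measure.map_fst_sumIndepCoupling hmass hfin, hsum μ hμI]
  have : IsProbabilityMeasure (γ.map Prod.fst) := hfst ▸ ‹_›
  refine ⟨γ, Measure.isProbabilityMeasure_of_map Prod.fst, hfst, by
    rw [Measure.map_snd_sumIndepCoupling hmass hfin, hsum ν hνI], ?_⟩
  calc ∫⁻ p, ENNReal.ofReal |p.1 - p.2| ∂γ
      ≤ ∑ p ∈ t, hatPiece μ c M p.2 univ * ENNReal.ofReal (D p.1) := by
        refine Measure.lintegral_sumIndepCoupling_le (S := fun p : (_ : ℕ) × ℕ =>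
            Icc (c (max (p.2 - 1) (s p.1))) (c (min (p.2 + 1) (e p.1))))
          (fun p hp => ae_hatPiece_mem hb hcm (ht p hp).1 (ht p hp).2 hμ)
          (fun p hp => ae_hatPiece_mem hb hcm (ht p hp).1 (ht p hp).2 hν)
          (fun p hp x hx y hy => ?_) hmass
        have := hD p.1 (ht p hp).1 p.2 (ht p hp).2
        exact ENNReal.ofReal_le_ofReal
          (abs_sub_le_iff.2 ⟨by linarith [hx.2, hy.1], by linarith [hx.1, hy.2]⟩)
    _ ≤ ∑ l ∈ Finset.range k, μ (Icc (c (s l)) (c (e l))) * ENNReal.ofReal (D l) := by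
        rw [Finset.sum_sigma]
        refine Finset.sum_le_sum fun l hl => ?_
        dsimp only
        rw [← Finset.sum_mul]
        exact mul_le_mul_left (sum_hatPiece_apply_univ_le hb hc hM (Finset.mem_range.1 hl) hμ) _

end HatPiece

theorem eq_knotHat {c : ℕ → ℝ} {M j : ℕ} {g : ℕ → ℝ → ℝ}
    (hg0 : ∀ x, g 0 x = max (c 1 - x) 0 / (c 1 - c 0))
    (hgj : ∀ j, 1 ≤ j → j < M → ∀ x,
      g j x = min (max (x - c (j - 1)) 0 / (c j - c (j - 1)))
        (max (c (j + 1) - x) 0 / (c (j + 1) - c j)))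
    (hgM : ∀ x, g M x = max (x - c (M - 1)) 0 / (c M - c (M - 1))) (hj : j ≤ M) :
    g j = knotHat c M j := funext fun x => by
  unfold knotHat rampUp rampDown
  split_ifs with h0 hjM
  · subst h0; exact hg0 x
  · exact hgj j (Nat.pos_of_ne_zero h0) hjM x
  · obtain rfl : j = M := by omega
    exact hgM x

/-- Knots are indexed globally as `c 0 < ⋯ < c M`, and `g j` is the hat function at `c j`. -/
theorem stmt_5
    (k : ℕ) (hk : 1 ≤ k) (M : ℕ) (hM : 1 ≤ M)
    (c : ℕ → ℝ) (hc : ∀ i < M, c i < c (i + 1))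
    (s e : ℕ → ℕ)
    (hs0 : s 0 = 0) (heM : e (k - 1) = M)
    (hse : ∀ l < k, s l ≤ e l)
    (hnext : ∀ l, l + 1 < k → s (l + 1) = e l + 1)
    (X : Set ℝ) (hXdef : X = ⋃ l ∈ Finset.range k, Icc (c (s l)) (c (e l)))
    (μ : Measure ℝ) [IsProbabilityMeasure μ] (hμ : μ Xᶜ = 0)
    (g : ℕ → ℝ → ℝ)
    (hg0 : ∀ x, g 0 x = max (c 1 - x) 0 / (c 1 - c 0))
    (hgj : ∀ j, 1 ≤ j → j < M → ∀ x,
      g j x = min (max (x - c (j - 1)) 0 / (c j - c (j - 1)))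
        (max (c (j + 1) - x) 0 / (c (j + 1) - c j)))
    (hgM : ∀ x, g M x = max (x - c (M - 1)) 0 / (c M - c (M - 1)))
    (ν : Measure ℝ) [IsProbabilityMeasure ν] (hν : ν Xᶜ = 0)
    (hmom : ∀ j, 1 ≤ j → j ≤ M → ∫ x, g j x ∂ν = ∫ x, g j x ∂μ) :
    sInf {r | ∃ γ : Measure (ℝ × ℝ), IsProbabilityMeasure γ ∧
        γ.map Prod.fst = μ ∧ γ.map Prod.snd = ν ∧ r = ∫ p, |p.1 - p.2| ∂γ}
      ≤ ∑ l ∈ Finset.range k, (μ (Icc (c (s l)) (c (e l)))).toReal *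
          sSup {r | ∃ j, s l ≤ j ∧ j ≤ e l ∧
            r = c (min (j + 1) (e l)) - c (max (j - 1) (s l))} := by
  have hcm := monotoneOn_Iic_of_lt_succ hc
  have hb : IsKnotBlocks k M s e := ⟨hk, hs0, heM, hse, hnext⟩
  subst hXdef
  have hD : ∀ l < k, ∀ j ∈ Finset.Icc (s l) (e l),
      c (min (j + 1) (e l)) - c (max (j - 1) (s l)) ≤ sSup {r | ∃ j, s l ≤ j ∧ j ≤ e l ∧
        r = c (min (j + 1) (e l)) - c (max (j - 1) (s l))} := fun l _ j hj =>
    le_sSup_of_mem_Icc (F := fun j => c (min (j + 1) (e l)) - c (max (j - 1) (s l)))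
      (Finset.mem_Icc.1 hj).1 (Finset.mem_Icc.1 hj).2
  have hD0 : ∀ l ∈ Finset.range k, 0 ≤ sSup {r | ∃ j, s l ≤ j ∧ j ≤ e l ∧
      r = c (min (j + 1) (e l)) - c (max (j - 1) (s l))} := fun l hl => by
    rw [Finset.mem_range] at hl
    have := hb.le l hl
    have := hb.le_last hl
    exact (sub_nonneg.2 (hcm (mem_Iic.2 (by omega)) (mem_Iic.2 (by omega)) (by omega))).trans
      (hD l hl (s l) (Finset.mem_Icc.2 ⟨le_rfl, hb.le l hl⟩))
  obtain ⟨γ, hγ, hfst, hsnd, hcost⟩ := exists_coupling_lintegral_le hb hc hM (ae_iff.2 hμ)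
    (ae_iff.2 hν) (fun j h1 hj => by simpa only [eq_knotHat hg0 hgj hgM hj] using hmom j h1 hj) hD
  exact (sInf_transportCost_le hfst hsnd (ENNReal.sum_ne_top.2 fun l _ =>
      ENNReal.mul_ne_top (measure_ne_top _ _) ENNReal.ofReal_ne_top) hcost).trans_eq
    (ENNReal.toReal_sum_mul_ofReal (fun _ _ => measure_ne_top _ _) hD0)
end

section
/- Let X₁,…,X_N ⊂ ℝ be compact, 𝒳 := X₁×⋯×X_N, S ⊂ ℝ^K a compact set, and W ∈ ℝ^{K×N}, b ∈ ℝ^K. Let μ̂ and μ̃ be Borel probability measures on 𝒳 × S, and suppose there is a probability measure γ on 𝒳 × 𝒳̄ × S (with 𝒳̄ a copy of 𝒳) whose marginal on 𝒳 × S is μ̂, whose marginal on 𝒳̄ × S is μ̃, and whose marginal γ_i on X_i × X̄_i satisfies ∫ |x − x̄| dγ_i = W₁(μ̂_i, μ_i) for each i, where μ̂_i and μ_i are the i-th one-dimensional marginals of μ̂ and μ̃ respectively. Then ∫ ⟨Wx + b, λ⟩ dμ̂(x,λ) − ∫ ⟨Wx + b, λ⟩ dμ̃(x,λ) ≤ (∑_{i=1}^N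 W₁(μ̂_i, μ_i)) · sup_{λ ∈ S} ‖Wᵀλ‖_∞. -/
open MeasureTheory Matrix

/-- Wasserstein-1 distance between Borel probability measures on `ℝ`, as the infimum of the
transport cost `∫ |x − y| dγ` over all couplings `γ`. -/
noncomputable def wass1 (μ ν : Measure ℝ) : ℝ :=
  sInf {r | ∃ γ : Measure (ℝ × ℝ), IsProbabilityMeasure γ ∧
    γ.map Prod.fst = μ ∧ γ.map Prod.snd = ν ∧ r = ∫ p, |p.1 - p.2| ∂γ}

/-!
Under `γ` both integrals become integrals over the same space, so the gap is `∫ ⟨Wᵀλ, x − x̄⟩ dγ`.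
Pointwise `⟨Wᵀλ, x − x̄⟩ ≤ ‖Wᵀλ‖_∞ ‖x − x̄‖₁`, and `λ ∈ S` almost surely, so the gap is at most
`sup_S ‖Wᵀλ‖_∞ · ∑ᵢ ∫ |xᵢ − x̄ᵢ| dγ`; by optimality of the marginal couplings of `γ` the last
integrals are the Wasserstein distances. Compactness of the supports makes everything integrable.
-/

theorem Continuous.integrable_of_ae_mem_isCompact {α E : Type*} [MeasurableSpace α]
    [TopologicalSpace α] [OpensMeasurableSpace α] [T2Space α] [NormedAddCommGroup E]
    {μ : Measure α} [IsFiniteMeasure μ] {A : Set α} (hA : IsCompact A) (hμA : ∀ᵐ x ∂μ, x ∈ A)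
    {f : α → E} (hf : Continuous f) : Integrable f μ := by
  have hfA : IntegrableOn f A μ := hf.continuousOn.integrableOn_compact hA
  rwa [IntegrableOn, Measure.restrict_eq_self_of_ae_mem hμA] at hfA

theorem dotProduct_le_norm_mul_sum_abs {ι : Type*} [Fintype ι] (v w : ι → ℝ) :
    v ⬝ᵥ w ≤ ‖v‖ * ∑ i, |w i| := by
  rw [Finset.mul_sum]
  refine Finset.sum_le_sum fun i _ => (le_abs_self _).trans ?_
  rw [abs_mul, ← Real.norm_eq_abs (v i)]
  exact mul_le_mul_of_nonneg_right (norm_le_pi_norm v i) (abs_nonneg _)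

theorem mulVec_add_dotProduct_sub_le {m n : Type*} [Fintype m] [Fintype n]
    (W : Matrix m n ℝ) (b : m → ℝ) (x y : n → ℝ) (lam : m → ℝ) :
    (W *ᵥ x + b) ⬝ᵥ lam - (W *ᵥ y + b) ⬝ᵥ lam ≤ (∑ i, |x i - y i|) * ‖Wᵀ *ᵥ lam‖ := by
  have hgap : (W *ᵥ x + b) ⬝ᵥ lam - (W *ᵥ y + b) ⬝ᵥ lam = (Wᵀ *ᵥ lam) ⬝ᵥ (x - y) := by
    rw [dotProduct_comm (Wᵀ *ᵥ lam), dotProduct_transpose_mulVec, mulVec_sub,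
      dotProduct_comm lam, ← sub_dotProduct, add_sub_add_right_eq_sub]
  rw [hgap, mul_comm]
  simpa only [Pi.sub_apply] using dotProduct_le_norm_mul_sum_abs (Wᵀ *ᵥ lam) (x - y)

theorem integral_mulVec_add_dotProduct_sub_le {m n : Type*} [Fintype m] [Fintype n]
    (W : Matrix m n ℝ) (b : m → ℝ) (γ : Measure ((n → ℝ) × (n → ℝ) × (m → ℝ)))
    [IsFiniteMeasure γ] {A : Set ((n → ℝ) × (n → ℝ) × (m → ℝ))} (hA : IsCompact A)
    (hγA : ∀ᵐ p ∂γ, p ∈ A) {S : Set (m → ℝ)} (hγS : ∀ᵐ p ∂γ, p.2.2 ∈ S) {M : ℝ}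
    (hM : ∀ lam ∈ S, ‖Wᵀ *ᵥ lam‖ ≤ M) :
    ∫ q, (W *ᵥ q.1 + b) ⬝ᵥ q.2 ∂(γ.map fun p => (p.1, p.2.2))
      - ∫ q, (W *ᵥ q.1 + b) ⬝ᵥ q.2 ∂(γ.map fun p => (p.2.1, p.2.2))
      ≤ (∑ i, ∫ p, |p.1 i - p.2.1 i| ∂γ) * M := by
  set f : (n → ℝ) × (m → ℝ) → ℝ := fun q => (W *ᵥ q.1 + b) ⬝ᵥ q.2
  have hf : Continuous f :=
    ((continuous_const.matrix_mulVec continuous_fst).add continuous_const).dotProduct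
      continuous_snd
  have hint {g : (n → ℝ) × (n → ℝ) × (m → ℝ) → ℝ} (hg : Continuous g) : Integrable g γ :=
    hg.integrable_of_ae_mem_isCompact hA hγA
  have hpointwise : ∀ᵐ p ∂γ, f (p.1, p.2.2) - f (p.2.1, p.2.2) ≤ (∑ i, |p.1 i - p.2.1 i|) * M :=
    hγS.mono fun p hp => (mulVec_add_dotProduct_sub_le W b _ _ _).trans <|
      mul_le_mul_of_nonneg_left (hM _ hp) (Finset.sum_nonneg fun i _ => abs_nonneg _)
  calc ∫ q, f q ∂(γ.map fun p => (p.1, p.2.2)) - ∫ q, f q ∂(γ.map fun p => (p.2.1, p.2.2))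
      = ∫ p, (f (p.1, p.2.2) - f (p.2.1, p.2.2)) ∂γ := by
        rw [integral_map (by fun_prop) hf.aestronglyMeasurable,
          integral_map (by fun_prop) hf.aestronglyMeasurable,
          integral_sub (hint (by fun_prop)) (hint (by fun_prop))]
    _ ≤ ∫ p, (∑ i, |p.1 i - p.2.1 i|) * M ∂γ :=
        integral_mono_ae (hint (by fun_prop)) (hint (by fun_prop)) hpointwise
    _ = (∑ i, ∫ p, |p.1 i - p.2.1 i| ∂γ) * M := by
        rw [integral_mul_const, integral_finsetSum _ fun i _ => hint (by fun_prop)]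

theorem stmt_8_general (N K : ℕ)
    (X : Fin N → Set ℝ) (hXc : ∀ i, IsCompact (X i))
    (S : Set (Fin K → ℝ)) (hSc : IsCompact S)
    (W : Matrix (Fin K) (Fin N) ℝ) (b : Fin K → ℝ)
    (μhat μtil : Measure ((Fin N → ℝ) × (Fin K → ℝ)))
    [IsProbabilityMeasure μhat] [IsProbabilityMeasure μtil]
    (γ : Measure ((Fin N → ℝ) × (Fin N → ℝ) × (Fin K → ℝ))) [IsProbabilityMeasure γ]
    (hγhat : γ.map (fun p => (p.1, p.2.2)) = μhat)
    (hγtil : γ.map (fun p => (p.2.1, p.2.2)) = μtil)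
    (hsupp : γ {p | (∀ i, p.1 i ∈ X i) ∧ (∀ i, p.2.1 i ∈ X i) ∧ p.2.2 ∈ S}ᶜ = 0)
    (hopt : ∀ i, ∫ p, |p.1 i - p.2.1 i| ∂γ
      = wass1 (μhat.map (fun q => q.1 i)) (μtil.map (fun q => q.1 i))) :
    ∫ p, (W.mulVec p.1 + b) ⬝ᵥ p.2 ∂μhat - ∫ p, (W.mulVec p.1 + b) ⬝ᵥ p.2 ∂μtil
      ≤ (∑ i, wass1 (μhat.map (fun q => q.1 i)) (μtil.map (fun q => q.1 i))) *
          sSup {r | ∃ lam ∈ S, r = ‖W.transpose.mulVec lam‖} := by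
  have hbdd : BddAbove {r | ∃ lam ∈ S, r = ‖W.transpose.mulVec lam‖} :=
    (hSc.image (continuous_norm.comp (continuous_const.matrix_mulVec continuous_id :
      Continuous fun lam : Fin K → ℝ => Wᵀ *ᵥ lam))).bddAbove.mono
      (by rintro _ ⟨lam, hlam, rfl⟩; exact ⟨lam, hlam, rfl⟩)
  have hA : IsCompact (Set.univ.pi X ×ˢ Set.univ.pi X ×ˢ S) :=
    (isCompact_univ_pi hXc).prod ((isCompact_univ_pi hXc).prod hSc)
  have hγA : ∀ᵐ p ∂γ, p ∈ Set.univ.pi X ×ˢ Set.univ.pi X ×ˢ S := by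
    refine ae_iff.2 (measure_mono_null ?_ hsupp)
    rintro p hp ⟨hx, hx', hlam⟩
    exact hp ⟨fun i _ => hx i, fun i _ => hx' i, hlam⟩
  have hgap := integral_mulVec_add_dotProduct_sub_le W b γ hA hγA (hγA.mono fun p hp => hp.2.2)
    fun lam hlam => le_csSup hbdd ⟨lam, hlam, rfl⟩
  rwa [hγhat, hγtil, Finset.sum_congr rfl fun i _ => hopt i] at hgap

/-- the partial-reassembly gap bound.  If `γ` glues `μ̂` and `μ̃` through
couplings of their one-dimensional marginals that attain the respective Wasserstein-1
distances, leaving the `S` component unchanged, then the difference of the integrals of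
`⟨Wx + b, λ⟩` is bounded by `(∑ᵢ W₁(μ̂ᵢ, μᵢ)) · sup_{λ ∈ S} ‖Wᵀλ‖_∞`. -/
theorem stmt_8 (N K : ℕ)
    (X : Fin N → Set ℝ) (hXc : ∀ i, IsCompact (X i))
    (S : Set (Fin K → ℝ)) (hSc : IsCompact S) (hSne : S.Nonempty)
    (W : Matrix (Fin K) (Fin N) ℝ) (b : Fin K → ℝ)
    (μhat μtil : Measure ((Fin N → ℝ) × (Fin K → ℝ)))
    [IsProbabilityMeasure μhat] [IsProbabilityMeasure μtil]
    (γ : Measure ((Fin N → ℝ) × (Fin N → ℝ) × (Fin K → ℝ))) [IsProbabilityMeasure γ]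
    (hγhat : γ.map (fun p => (p.1, p.2.2)) = μhat)
    (hγtil : γ.map (fun p => (p.2.1, p.2.2)) = μtil)
    (hsupp : γ {p | (∀ i, p.1 i ∈ X i) ∧ (∀ i, p.2.1 i ∈ X i) ∧ p.2.2 ∈ S}ᶜ = 0)
    (hopt : ∀ i, ∫ p, |p.1 i - p.2.1 i| ∂γ
      = wass1 (μhat.map (fun q => q.1 i)) (μtil.map (fun q => q.1 i))) :
    ∫ p, (W.mulVec p.1 + b) ⬝ᵥ p.2 ∂μhat - ∫ p, (W.mulVec p.1 + b) ⬝ᵥ p.2 ∂μtil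
      ≤ (∑ i, wass1 (μhat.map (fun q => q.1 i)) (μtil.map (fun q => q.1 i))) *
          sSup {r | ∃ lam ∈ S, r = ‖W.transpose.mulVec lam‖} :=
  stmt_8_general N K X hXc S hSc W b μhat μtil γ hγhat hγtil hsupp hopt
end

section
/- Let κ₀ < κ₁ < ⋯ < κ_m be real knots, X ⊆ [κ₀, κ_m] a finite union of compact intervals containing all κ_j, and let u : X → ℝ be continuous piecewise affine on the pieces X ∩ [κ_{j−1},κ_j] with u(κ₀) = 0. Let u** denote the convex bi-conjugate of u on X, i.e., u**(x) := sup_{η ∈ ℝ}(ηx − u*(η)) where u*(η) := sup_{x ∈ X}(ηx − u(x)). Then u** is itself continuous piecewise affine on the same pieces, satisfies u**(κ_j) ≤ u(κ_j) for all j, u**(κ₀) = u(κ₀) = 0, and u** ≤ u pointwise on X; moreover u** is determined by its values at the knots via the piecewise affine interpolation basis. -/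
/-!
On each piece `x ↦ η x - u x` is affine, so `u*` is the maximum `F` of the finitely many lines
`η ↦ η κ_j - u(κ_j)`. Fix a piece `[κ_{i-1}, κ_i]`. The maximum of the lines with slope `≤ κ_{i-1}`
and the maximum of those with slope `≥ κ_i` are continuous and cross at some `e`; there a line of
each group is active, so every `x ∈ [κ_{i-1}, κ_i]` is a subgradient of `F` at `e`, and
`u**(x) = e x - F e` is affine on the piece. For the first piece the active line of slope `≤ κ₀`
passes through `(κ₀, u(κ₀))`, which gives `u**(κ₀) = u(κ₀)`.
-/

open Set

section SupAffine

variable {ι : Type*} (s : Finset ι) (hs : s.Nonempty) (a c : ι → ℝ)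

def supAffine (η : ℝ) : ℝ :=
  s.sup' hs fun j => η * a j - c j

variable {s}

lemma le_supAffine {j : ι} (hj : j ∈ s) (η : ℝ) : η * a j - c j ≤ supAffine s hs a c η :=
  Finset.le_sup' (fun j => η * a j - c j) hj

variable {a c}

lemma continuous_supAffine : Continuous (supAffine s hs a c) :=
  Continuous.finset_sup'_apply hs fun _ _ => by fun_prop

lemma supAffine_le_of_slope_le {α η : ℝ} (hα : ∀ j ∈ s, a j ≤ α) (hη : 0 ≤ η) :
    supAffine s hs a c η ≤ supAffine s hs a c 0 + η * α :=
  Finset.sup'_le _ _ fun j hj => by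
    linarith [le_supAffine hs a c hj 0, mul_le_mul_of_nonneg_left (hα j hj) hη]

lemma supAffine_le_of_le_slope {β η : ℝ} (hβ : ∀ j ∈ s, β ≤ a j) (hη : η ≤ 0) :
    supAffine s hs a c η ≤ supAffine s hs a c 0 + η * β :=
  Finset.sup'_le _ _ fun j hj => by
    linarith [le_supAffine hs a c hj 0, mul_le_mul_of_nonpos_left (hβ j hj) hη]

/-- For large `η` the steeper family `R` dominates, for very negative `η` the flatter family `L`;
the intermediate value theorem gives a crossing. -/
lemma exists_supAffine_eq_supAffine {L R : Finset ι} (hL : L.Nonempty) (hR : R.Nonempty)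
    {α β : ℝ} (hαβ : α < β) (hLα : ∀ j ∈ L, a j ≤ α) (hRβ : ∀ j ∈ R, β ≤ a j) :
    ∃ e, supAffine L hL a c e = supAffine R hR a c e := by
  have ⟨l, hl⟩ := hL
  have ⟨r, hr⟩ := hR
  have hgap : 0 < β - α := sub_pos.2 hαβ
  set η₁ := min 0 ((-c l - supAffine R hR a c 0) / (β - α))
  set η₂ := max 0 ((supAffine L hL a c 0 + c r) / (β - α))
  refine intermediate_value_univ₂ (a := η₂) (b := η₁)
    (continuous_supAffine hL) (continuous_supAffine hR) ?_ ?_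
  · have hη₂ : 0 ≤ η₂ := le_max_left _ _
    linarith [(div_le_iff₀ hgap).1 (le_max_right 0 _ : _ ≤ η₂),
      supAffine_le_of_slope_le hL (c := c) hLα hη₂, le_supAffine hR a c hr η₂,
      mul_le_mul_of_nonneg_left (hRβ r hr) hη₂]
  · have hη₁ : η₁ ≤ 0 := min_le_left _ _
    linarith [(le_div_iff₀ hgap).1 (min_le_right 0 _ : η₁ ≤ _),
      supAffine_le_of_le_slope hR (c := c) hRβ hη₁, le_supAffine hL a c hl η₁,
      mul_le_mul_of_nonpos_left (hLα l hl) hη₁]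

lemma exists_supAffine_attained_of_slope_gap {α β : ℝ} (hαβ : α < β)
    (hsplit : ∀ j ∈ s, a j ≤ α ∨ β ≤ a j) (hL : ∃ j ∈ s, a j ≤ α) (hR : ∃ j ∈ s, β ≤ a j) :
    ∃ e, ∃ j₁ ∈ s, ∃ j₂ ∈ s, a j₁ ≤ α ∧ β ≤ a j₂ ∧
      supAffine s hs a c e = e * a j₁ - c j₁ ∧ supAffine s hs a c e = e * a j₂ - c j₂ := by
  classical
  have hL' : (s.filter (a · ≤ α)).Nonempty :=
    let ⟨j, hj, hja⟩ := hL; ⟨j, Finset.mem_filter.2 ⟨hj, hja⟩⟩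
  have hR' : (s.filter (β ≤ a ·)).Nonempty :=
    let ⟨j, hj, hja⟩ := hR; ⟨j, Finset.mem_filter.2 ⟨hj, hja⟩⟩
  obtain ⟨e, he⟩ := exists_supAffine_eq_supAffine (c := c) hL' hR' hαβ
    (fun j hj => (Finset.mem_filter.1 hj).2) (fun j hj => (Finset.mem_filter.1 hj).2)
  have hsplit_le : supAffine s hs a c e ≤ supAffine (s.filter (a · ≤ α)) hL' a c e := by
    refine Finset.sup'_le _ _ fun j hj => ?_
    rcases hsplit j hj with hja | hja
    · exact le_supAffine hL' a c (Finset.mem_filter.2 ⟨hj, hja⟩) e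
    · exact he ▸ le_supAffine hR' a c (Finset.mem_filter.2 ⟨hj, hja⟩) e
  obtain ⟨j₁, hj₁, he₁⟩ := Finset.exists_mem_eq_sup' hL' fun j => e * a j - c j
  obtain ⟨j₂, hj₂, he₂⟩ := Finset.exists_mem_eq_sup' hR' fun j => e * a j - c j
  rw [Finset.mem_filter] at hj₁ hj₂
  refine ⟨e, j₁, hj₁.1, j₂, hj₂.1, hj₁.2, hj₂.2, ?_, ?_⟩
  · exact le_antisymm (hsplit_le.trans_eq he₁) (le_supAffine hs a c hj₁.1 e)
  · exact le_antisymm (hsplit_le.trans_eq (he.trans he₂)) (le_supAffine hs a c hj₂.1 e)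

lemma mul_le_max_of_mem_Icc {t x p q : ℝ} (hx : x ∈ Icc p q) : t * x ≤ max (t * p) (t * q) := by
  rcases le_total 0 t with ht | ht
  · exact le_max_of_le_right (mul_le_mul_of_nonneg_left hx.2 ht)
  · exact le_max_of_le_left (mul_le_mul_of_nonpos_left hx.1 ht)

lemma add_mul_le_supAffine {e x : ℝ} {j₁ j₂ : ι} (hj₁ : j₁ ∈ s) (hj₂ : j₂ ∈ s)
    (he₁ : supAffine s hs a c e = e * a j₁ - c j₁) (he₂ : supAffine s hs a c e = e * a j₂ - c j₂)
    (hx : x ∈ Icc (a j₁) (a j₂)) (η : ℝ) :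
    supAffine s hs a c e + (η - e) * x ≤ supAffine s hs a c η := by
  rcases le_max_iff.1 (mul_le_max_of_mem_Icc (t := η - e) hx) with h | h
  · linarith [le_supAffine hs a c hj₁ η]
  · linarith [le_supAffine hs a c hj₂ η]

end SupAffine

noncomputable def biconj (g : ℝ → ℝ) (x : ℝ) : ℝ :=
  sSup {v | ∃ η, v = η * x - g η}

lemma biconj_eq_of_subgradient {g : ℝ → ℝ} {e x : ℝ} (h : ∀ η, g e + (η - e) * x ≤ g η) :
    biconj g x = e * x - g e :=
  IsGreatest.csSup_eq ⟨⟨e, rfl⟩, by rintro _ ⟨η, rfl⟩; linarith [h η]⟩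

lemma eqOn_of_affine_of_eq_of_eq {f g : ℝ → ℝ} {S : Set ℝ} {a b : ℝ} (hab : a ≠ b)
    (ha : a ∈ S) (hb : b ∈ S) (hf : ∃ p q : ℝ, ∀ x ∈ S, f x = p * x + q)
    (hg : ∃ p q : ℝ, ∀ x ∈ S, g x = p * x + q) (hfa : f a = g a) (hfb : f b = g b) :
    EqOn f g S := by
  obtain ⟨p, q, hf⟩ := hf
  obtain ⟨p', q', hg⟩ := hg
  rw [hf a ha, hg a ha] at hfa
  rw [hf b hb, hg b hb] at hfb
  have hp : p = p' := mul_right_cancel₀ (sub_ne_zero.2 hab.symm) (by linear_combination hfb - hfa)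
  intro x hx
  rw [hf x hx, hg x hx, hp]
  linarith [hp ▸ hfa]

abbrev knotConj (m : ℕ) (κ : ℕ → ℝ) (u : ℝ → ℝ) : ℝ → ℝ :=
  supAffine (Finset.range (m + 1)) Finset.nonempty_range_add_one κ (u ∘ κ)

section Knots

variable {κ : ℕ → ℝ}

lemma exists_mem_Icc_of_mem_Icc_zero {n : ℕ} (hn : 1 ≤ n) {x : ℝ}
    (hx : x ∈ Icc (κ 0) (κ n)) : ∃ i, 1 ≤ i ∧ i ≤ n ∧ x ∈ Icc (κ (i - 1)) (κ i) := by
  induction n, hn using Nat.le_induction with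
  | base => exact ⟨1, le_rfl, le_rfl, hx⟩
  | succ n hn ih =>
    by_cases hxn : x ≤ κ n
    · obtain ⟨i, hi₁, hin, hxi⟩ := ih ⟨hx.1, hxn⟩
      exact ⟨i, hi₁, hin.trans n.le_succ, hxi⟩
    · exact ⟨n + 1, by omega, le_rfl, by simpa using (not_le.1 hxn).le, hx.2⟩

lemma continuousOn_Icc_of_continuousOn_pieces {f : ℝ → ℝ} {n : ℕ}
    (hf : ∀ i, 1 ≤ i → i ≤ n → ContinuousOn f (Icc (κ (i - 1)) (κ i))) :
    ContinuousOn f (Icc (κ 0) (κ n)) := by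
  induction n with
  | zero => simp
  | succ n ih =>
    refine ContinuousOn.mono ?_ (Icc_subset_Icc_union_Icc (b := κ n))
    refine (ih fun i hi₁ hin => hf i hi₁ (by omega)).union_of_isClosed ?_ isClosed_Icc isClosed_Icc
    simpa using hf (n + 1) (by omega) le_rfl

variable {m : ℕ} {X : Set ℝ} {u : ℝ → ℝ}

lemma sub_le_knotConj (hm : 1 ≤ m) (hsub : X ⊆ Icc (κ 0) (κ m))
    (huaff : ∀ i, 1 ≤ i → i ≤ m →
      ∃ p q : ℝ, ∀ x ∈ X ∩ Icc (κ (i - 1)) (κ i), u x = p * x + q)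
    (hknots : ∀ i ≤ m, κ i ∈ X) {x : ℝ} (hx : x ∈ X) (η : ℝ) :
    η * x - u x ≤ knotConj m κ u η := by
  obtain ⟨i, hi₁, him, hxi⟩ := exists_mem_Icc_of_mem_Icc_zero hm (hsub hx)
  obtain ⟨p, q, hpq⟩ := huaff i hi₁ him
  have hl := le_supAffine Finset.nonempty_range_add_one κ (u ∘ κ)
    (Finset.mem_range.2 (by omega : i - 1 < m + 1)) η
  have hr := le_supAffine Finset.nonempty_range_add_one κ (u ∘ κ)
    (Finset.mem_range.2 (by omega : i < m + 1)) η
  rw [Function.comp_apply, hpq _ ⟨hknots _ (by omega), le_rfl, hxi.1.trans hxi.2⟩] at hl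
  rw [Function.comp_apply, hpq _ ⟨hknots _ him, hxi.1.trans hxi.2, le_rfl⟩] at hr
  rw [hpq x ⟨hx, hxi⟩]
  rcases le_max_iff.1 (mul_le_max_of_mem_Icc (t := η - p) hxi) with h | h <;> linarith

lemma sSup_conj_eq_knotConj (hm : 1 ≤ m) (hsub : X ⊆ Icc (κ 0) (κ m))
    (huaff : ∀ i, 1 ≤ i → i ≤ m →
      ∃ p q : ℝ, ∀ x ∈ X ∩ Icc (κ (i - 1)) (κ i), u x = p * x + q)
    (hknots : ∀ i ≤ m, κ i ∈ X) (η : ℝ) :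
    sSup {v | ∃ x ∈ X, v = η * x - u x} = knotConj m κ u η := by
  obtain ⟨j, hj, hjmax⟩ :=
    Finset.exists_mem_eq_sup' Finset.nonempty_range_add_one fun j => η * κ j - (u ∘ κ) j
  refine IsGreatest.csSup_eq ⟨⟨κ j, hknots j (Finset.mem_range_succ_iff.1 hj), hjmax⟩, ?_⟩
  rintro _ ⟨x, hx, rfl⟩
  exact sub_le_knotConj hm hsub huaff hknots hx η

lemma exists_subgradient_knotConj (hκ : StrictMonoOn κ (Iic m)) {i : ℕ}
    (hi₁ : 1 ≤ i) (him : i ≤ m) :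
    ∃ e, ∃ j ≤ m, κ j ≤ κ (i - 1) ∧ knotConj m κ u e = e * κ j - u (κ j) ∧
      ∀ x ∈ Icc (κ (i - 1)) (κ i), ∀ η, knotConj m κ u e + (η - e) * x ≤ knotConj m κ u η := by
  have hsplit : ∀ j ∈ Finset.range (m + 1), κ j ≤ κ (i - 1) ∨ κ i ≤ κ j := by
    intro j hj
    have hjm := Finset.mem_range_succ_iff.1 hj
    rcases lt_or_ge j i with hji | hij
    · exact .inl (hκ.monotoneOn hjm (mem_Iic.2 (by omega)) (by omega))
    · exact .inr (hκ.monotoneOn him hjm hij)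
  obtain ⟨e, j₁, hj₁, j₂, hj₂, hj₁i, hj₂i, he₁, he₂⟩ :=
    exists_supAffine_attained_of_slope_gap Finset.nonempty_range_add_one
      (hκ (mem_Iic.2 (by omega)) (mem_Iic.2 him) (by omega : i - 1 < i)) hsplit
      ⟨i - 1, Finset.mem_range.2 (by omega), le_rfl⟩ ⟨i, Finset.mem_range.2 (by omega), le_rfl⟩
  exact ⟨e, j₁, Finset.mem_range_succ_iff.1 hj₁, hj₁i, he₁, fun x hx =>
    add_mul_le_supAffine _ hj₁ hj₂ he₁ he₂ ⟨hj₁i.trans hx.1, hx.2.trans hj₂i⟩⟩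

lemma biconj_knotConj_le (hm : 1 ≤ m) (hsub : X ⊆ Icc (κ 0) (κ m))
    (huaff : ∀ i, 1 ≤ i → i ≤ m →
      ∃ p q : ℝ, ∀ x ∈ X ∩ Icc (κ (i - 1)) (κ i), u x = p * x + q)
    (hknots : ∀ i ≤ m, κ i ∈ X) {x : ℝ} (hx : x ∈ X) : biconj (knotConj m κ u) x ≤ u x :=
  csSup_le ⟨_, 0, rfl⟩ fun _ ⟨η, hv⟩ => by
    linarith [sub_le_knotConj hm hsub huaff hknots hx η]

lemma exists_biconj_knotConj_eq (hκ : StrictMonoOn κ (Iic m)) {i : ℕ} (hi₁ : 1 ≤ i)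
    (him : i ≤ m) : ∃ e, ∀ x ∈ Icc (κ (i - 1)) (κ i),
      biconj (knotConj m κ u) x = e * x - knotConj m κ u e :=
  let ⟨e, _, _, _, _, hsg⟩ := exists_subgradient_knotConj hκ hi₁ him
  ⟨e, fun x hx => biconj_eq_of_subgradient (hsg x hx)⟩

lemma biconj_knotConj_zero (hκ : StrictMonoOn κ (Iic m)) (hm : 1 ≤ m) :
    biconj (knotConj m κ u) (κ 0) = u (κ 0) := by
  obtain ⟨e, j, hjm, hj, he, hsg⟩ := exists_subgradient_knotConj (u := u) hκ le_rfl hm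
  have hκj : κ j = κ 0 := le_antisymm hj (hκ.monotoneOn (mem_Iic.2 (Nat.zero_le m)) hjm (Nat.zero_le j))
  have hκ₁ : κ 0 ≤ κ 1 := hκ.monotoneOn (mem_Iic.2 (Nat.zero_le m)) (mem_Iic.2 hm) zero_le_one
  rw [biconj_eq_of_subgradient (hsg (κ 0) ⟨le_rfl, hκ₁⟩), he, hκj]
  ring

end Knots

theorem stmt_12_general (m : ℕ) (hm : 1 ≤ m) (κ : ℕ → ℝ)
    (hκ : ∀ i < m, κ i < κ (i + 1))
    (X : Set ℝ)
    (hknots : ∀ i ≤ m, κ i ∈ X)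
    (hsub : X ⊆ Icc (κ 0) (κ m))
    (u : ℝ → ℝ)
    (huaff : ∀ i, 1 ≤ i → i ≤ m →
      ∃ p q : ℝ, ∀ x ∈ X ∩ Icc (κ (i - 1)) (κ i), u x = p * x + q)
    (hu0 : u (κ 0) = 0)
    (ustar : ℝ → ℝ) (hustar : ∀ η, ustar η = sSup {v | ∃ x ∈ X, v = η * x - u x})
    (ustst : ℝ → ℝ) (hustst : ∀ x, ustst x = sSup {v | ∃ η : ℝ, v = η * x - ustar η}) :
    (∀ i, 1 ≤ i → i ≤ m →
      ∃ p q : ℝ, ∀ x ∈ X ∩ Icc (κ (i - 1)) (κ i), ustst x = p * x + q) ∧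
    ContinuousOn ustst X ∧
    (∀ j ≤ m, ustst (κ j) ≤ u (κ j)) ∧
    ustst (κ 0) = u (κ 0) ∧ ustst (κ 0) = 0 ∧
    (∀ x ∈ X, ustst x ≤ u x) ∧
    (∀ h : ℝ → ℝ,
      (∀ i, 1 ≤ i → i ≤ m →
        ∃ p q : ℝ, ∀ x ∈ X ∩ Icc (κ (i - 1)) (κ i), h x = p * x + q) →
      (∀ j ≤ m, h (κ j) = ustst (κ j)) →
      ∀ x ∈ X, h x = ustst x) := by
  have hstrict : StrictMonoOn κ (Iic m) := strictMonoOn_Iic_of_lt_succ fun i hi => by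
    simpa using hκ i hi
  obtain rfl : ustar = knotConj m κ u := funext fun η =>
    (hustar η).trans (sSup_conj_eq_knotConj hm hsub huaff hknots η)
  obtain rfl : ustst = biconj (knotConj m κ u) := funext hustst
  have haff : ∀ i, 1 ≤ i → i ≤ m → ∃ p q : ℝ, ∀ x ∈ X ∩ Icc (κ (i - 1)) (κ i),
      biconj (knotConj m κ u) x = p * x + q := fun i hi₁ him =>
    let ⟨e, he⟩ := exists_biconj_knotConj_eq hstrict hi₁ him
    ⟨e, _, fun x hx => (he x hx.2).trans (sub_eq_add_neg _ _)⟩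
  have hle := fun x (hx : x ∈ X) => biconj_knotConj_le hm hsub huaff hknots hx
  have hκ₀ := biconj_knotConj_zero (u := u) hstrict hm
  refine ⟨haff, ?_, fun j hj => hle _ (hknots j hj), hκ₀, hκ₀.trans hu0, hle, ?_⟩
  · refine (continuousOn_Icc_of_continuousOn_pieces fun i hi₁ him => ?_).mono hsub
    obtain ⟨e, he⟩ := exists_biconj_knotConj_eq (u := u) hstrict hi₁ him
    exact (continuousOn_congr he).2 (by fun_prop)
  · intro h hh hknot x hx
    obtain ⟨i, hi₁, him, hxi⟩ := exists_mem_Icc_of_mem_Icc_zero hm (hsub hx)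
    have hlt : κ (i - 1) < κ i := hstrict (mem_Iic.2 (by omega)) (mem_Iic.2 him) (by omega)
    exact eqOn_of_affine_of_eq_of_eq (S := X ∩ Icc (κ (i - 1)) (κ i)) hlt.ne
      ⟨hknots _ (by omega), le_rfl, hlt.le⟩ ⟨hknots _ him, hlt.le, le_rfl⟩
      (hh i hi₁ him) (haff i hi₁ him) (hknot _ (by omega)) (hknot i him) ⟨hx, hxi⟩

/-- the convex bi-conjugate `u**` of a continuous piecewise affine function
`u` on a finite union of compact intervals `X` with knots `κ 0 < ⋯ < κ m` and `u(κ 0) = 0`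
is again continuous piecewise affine on the same pieces, satisfies `u**(κ_j) ≤ u(κ_j)`,
`u**(κ 0) = u(κ 0) = 0`, `u** ≤ u` on `X`, and it is determined by its values at the knots
via piecewise affine interpolation. -/
theorem stmt_12 (m : ℕ) (hm : 1 ≤ m) (κ : ℕ → ℝ)
    (hκ : ∀ i < m, κ i < κ (i + 1))
    (X : Set ℝ)
    (hknots : ∀ i ≤ m, κ i ∈ X)
    (hsub : X ⊆ Icc (κ 0) (κ m))
    (hpieces : ∀ i, 1 ≤ i → i ≤ m →
      X ∩ Icc (κ (i - 1)) (κ i) = Icc (κ (i - 1)) (κ i) ∨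
      X ∩ Icc (κ (i - 1)) (κ i) = {κ (i - 1), κ i})
    (u : ℝ → ℝ) (hucont : ContinuousOn u X)
    (huaff : ∀ i, 1 ≤ i → i ≤ m →
      ∃ p q : ℝ, ∀ x ∈ X ∩ Icc (κ (i - 1)) (κ i), u x = p * x + q)
    (hu0 : u (κ 0) = 0)
    (ustar : ℝ → ℝ) (hustar : ∀ η, ustar η = sSup {v | ∃ x ∈ X, v = η * x - u x})
    (ustst : ℝ → ℝ) (hustst : ∀ x, ustst x = sSup {v | ∃ η : ℝ, v = η * x - ustar η}) :
    (∀ i, 1 ≤ i → i ≤ m →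
      ∃ p q : ℝ, ∀ x ∈ X ∩ Icc (κ (i - 1)) (κ i), ustst x = p * x + q) ∧
    ContinuousOn ustst X ∧
    (∀ j ≤ m, ustst (κ j) ≤ u (κ j)) ∧
    ustst (κ 0) = u (κ 0) ∧ ustst (κ 0) = 0 ∧
    (∀ x ∈ X, ustst x ≤ u x) ∧
    (∀ h : ℝ → ℝ,
      (∀ i, 1 ≤ i → i ≤ m →
        ∃ p q : ℝ, ∀ x ∈ X ∩ Icc (κ (i - 1)) (κ i), h x = p * x + q) →
      (∀ j ≤ m, h (κ j) = ustst (κ j)) →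
      ∀ x ∈ X, h x = ustst x) :=
  stmt_12_general m hm κ hκ X hknots hsub u huaff hu0 ustar hustar ustst hustst
end
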